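/- arXiv:1310.5919 — 8 statements merged into one kernel-verified Lean document; each statement's English description precedes it below -/
import Mathlib

section
/- Let d ≥ 0 and let (N, n_0, …, n_d) be a (d+2)-tuple of nonnegative integers. If †(N, n_0, …, n_d) = 0 then C(N, n_0, …, n_d) = 0, and if †(N, n_0, …, n_d) = 1 then (C(N, n_0, …, n_d) : ℚ) = F(N, n_0, …, n_d). -/
/-!
Deleting the last step of a ballot path gives, for weakly decreasing `n`,
`C(N+1, n) = ∑_s C(N, n - s)` over the `0/1` vectors `s ≤ n`, and `C(0, n) = [n = 0]`.
The formula `F` obeys the same recursion. With `x_i = m_i` and `c = N + 1 + d`, clearing the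
factorials reduces it to
`∑_s ∏_{s_i = 1} x_i ∏_{s_i = 0} (c - x_i) · V(x - s) = ∏_{j ≤ d} (c - j) · V(x)`.
Up to the sign relating `V` to the Vandermonde determinant, both sides are the determinant of
the matrix with entries `(c - x_i) x_i^j + x_i (x_i - 1)^j`: the left side by multilinearity in
the rows, the right side because this entry is a polynomial of degree `≤ j` in `x_i` with
coefficient `c - j` at `x_i^j`. Terms with `s ≰ n` vanish, since
then `x - s` has two equal entries or the weight contains `x_d = 0`. Finally, if `†` holds but
`n` is not decreasing, then `m_i = m_{i+1}` for some `i` and both sides are `0`.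
-/

/-- The Vandermonde product `∏_{i<j} (x i - x j)`. -/
def vmd {k : ℕ} {R : Type*} [CommRing R] (x : Fin k → R) : R :=
  ∏ i : Fin k, ∏ j ∈ Finset.univ.filter (fun j => i < j), (x i - x j)

/-- `C(N, n_0, …, n_d)`: the number of lists `(v_1, …, v_N)` of vectors in `{0,1}^{d+1}`
summing to `(n_0, …, n_d)` all of whose partial sums are weakly decreasing in the
coordinates. -/
noncomputable def ballotCount (d N : ℕ) (n : Fin (d + 1) → ℕ) : ℕ :=
  Nat.card {v : Fin N → Fin (d + 1) → ℕ //
    (∀ k i, v k i ≤ 1) ∧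
    (∀ i, ∑ k, v k i = n i) ∧
    (∀ L : Fin N, ∀ i j : Fin (d + 1), i ≤ j →
      ∑ k ∈ Finset.univ.filter (fun k => k ≤ L), v k j ≤
        ∑ k ∈ Finset.univ.filter (fun k => k ≤ L), v k i)}

/-- `F(N, n_0, …, n_d) = (∏_i ∏_{k<n_i} (N+i-k)) · V(m_0,…,m_d) / (m_0! ⋯ m_d!)`,
where `m_i = n_i + d - i`. -/
def Fq (d N : ℕ) (n : Fin (d + 1) → ℕ) : ℚ :=
  (∏ i : Fin (d + 1), ∏ k ∈ Finset.range (n i), ((N : ℚ) + (i : ℕ) - (k : ℕ))) *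
    vmd (fun i : Fin (d + 1) => ((n i + d - (i : ℕ) : ℕ) : ℚ)) /
      ∏ i : Fin (d + 1), (Nat.factorial (n i + d - (i : ℕ)) : ℚ)


open Finset Matrix Polynomial

section Vandermonde

variable {R : Type*} [CommRing R] {k : ℕ}

lemma vmd_eq_prod_Ioi (x : Fin k → R) : vmd x = ∏ i, ∏ j > i, (x i - x j) := by
  simp only [vmd, filter_lt_eq_Ioi]

lemma vmd_eq_zero_of_eq (x : Fin k → R) {i j : Fin k} (hij : i < j) (h : x i = x j) :
    vmd x = 0 :=
  prod_eq_zero (mem_univ i) <|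
    prod_eq_zero (mem_filter.2 ⟨mem_univ j, hij⟩) (by rw [h, sub_self])

lemma vmd_eq_mul_det_vandermonde (x : Fin k → R) :
    vmd x = (∏ i : Fin k, (-1) ^ #(Ioi i)) * (vandermonde x).det := by
  simp only [vmd_eq_prod_Ioi, det_vandermonde, ← prod_mul_distrib, ← prod_neg, neg_sub]

lemma det_eval_matrixOfPolynomials (x : Fin k → R) (p : Fin k → R[X])
    (h_deg : ∀ j, (p j).natDegree ≤ j) :
    (of fun i j => (p j).eval (x i)).det = (∏ j, (p j).coeff j) * (vandermonde x).det := by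
  rw [eval_matrixOfPolynomials_eq_vandermonde_mul_matrixOfPolynomials x p h_deg, det_mul,
    det_of_isUpperTriangular (matrixOfPolynomials_blockTriangular p h_deg), mul_comm]
  rfl

lemma vmd_staircase (d : ℕ) :
    vmd (fun i : Fin (d + 1) => ((d - i : ℕ) : R)) = d.superFactorial := by
  rw [← det_vandermonde_id_eq_superFactorial, det_vandermonde, vmd_eq_prod_Ioi]
  refine prod_congr rfl fun i _ => prod_congr rfl fun j hj => ?_
  have hij : i < j := mem_Ioi.1 hj
  have := j.is_le
  rw [Nat.cast_sub (by omega), Nat.cast_sub (by omega)]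
  ring

end Vandermonde

section RowPolynomial

variable {R : Type*} [CommRing R] {k : ℕ}

noncomputable def rowPoly (c : R) (j : ℕ) : R[X] := (C c - X) * X ^ j + X * (X - 1) ^ j

lemma coeff_rowPoly (c : R) {j t : ℕ} (ht : j ≤ t) :
    (rowPoly c j).coeff t = if t = j then c - j else 0 := by
  have hX : (X - 1 : R[X]) = X + C (-1) := by simp [sub_eq_add_neg]
  rcases t with _ | t
  · obtain rfl : j = 0 := by omega
    simp [rowPoly]
  · rw [rowPoly, sub_mul, ← pow_succ', hX, coeff_add, coeff_sub, coeff_C_mul, coeff_X_pow,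
      coeff_X_pow, coeff_X_mul, coeff_X_add_C_pow]
    obtain rfl | rfl | hlt : j = t + 1 ∨ j = t ∨ j < t := by omega
    · simp [sub_eq_add_neg, add_comm]
    · simp
    · simp [Nat.choose_eq_zero_of_lt hlt, hlt.ne', (hlt.trans t.lt_succ_self).ne']

lemma natDegree_rowPoly_le (c : R) (j : ℕ) : (rowPoly c j).natDegree ≤ j :=
  natDegree_le_iff_coeff_eq_zero.2 fun t ht => by rw [coeff_rowPoly c ht.le, if_neg ht.ne']

lemma eval_rowPoly (c x : R) (j : ℕ) :
    (rowPoly c j).eval x = ∑ b : Bool, (if b then x else c - x) * (x - b.toNat) ^ j := by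
  simp [rowPoly, add_comm]

lemma det_eval_rowPoly (c : R) (x : Fin k → R) :
    (of fun i j : Fin k => (rowPoly c j).eval (x i)).det =
      (∏ j : Fin k, (c - j)) * (vandermonde x).det := by
  rw [det_eval_matrixOfPolynomials x _ fun j => natDegree_rowPoly_le c j]
  simp only [coeff_rowPoly c le_rfl, if_true]

lemma det_eval_rowPoly_eq_sum (c : R) (x : Fin k → R) :
    (of fun i j : Fin k => (rowPoly c j).eval (x i)).det =
      ∑ s : Fin k → Bool, (∏ i, if s i then x i else c - x i) *
        (vandermonde fun i => x i - (s i).toNat).det := by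
  have hrows : (of fun i j : Fin k => (rowPoly c j).eval (x i)) =
      fun i => ∑ b : Bool,
        (if b then x i else c - x i) • fun j : Fin k => (x i - b.toNat) ^ (j : ℕ) := by
    ext i j
    simp [eval_rowPoly]
  rw [det, hrows, ← AlternatingMap.coe_multilinearMap, MultilinearMap.map_sum]
  refine sum_congr rfl fun s _ => ?_
  rw [MultilinearMap.map_smul_univ, smul_eq_mul]
  rfl

theorem sum_prod_mul_vmd_sub_toNat (c : R) (x : Fin k → R) :
    ∑ s : Fin k → Bool,
        (∏ i, if s i then x i else c - x i) * vmd (fun i => x i - (s i).toNat) =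
      (∏ j : Fin k, (c - j)) * vmd x := by
  simp only [vmd_eq_mul_det_vandermonde, mul_left_comm _ (∏ i : Fin k, (-1 : R) ^ #(Ioi i))]
  rw [← mul_sum, ← det_eval_rowPoly_eq_sum, det_eval_rowPoly]

end RowPolynomial

section Formula

noncomputable def fallingRatio (a : ℚ) (n m : ℕ) : ℚ :=
  (descPochhammer ℚ n).eval a / m.factorial

lemma fallingRatio_sub_toNat_mul (a : ℚ) {n m : ℕ} (b : Bool) (hn : b.toNat ≤ n)
    (hm : b.toNat ≤ m) :
    fallingRatio a (n - b.toNat) (m - b.toNat) * (a + 1) =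
      fallingRatio (a + 1) n m * if b then (m : ℚ) else a + 1 - n := by
  have hsucc (n : ℕ) :
      (descPochhammer ℚ (n + 1)).eval (a + 1) = (a + 1) * (descPochhammer ℚ n).eval a := by
    simp [descPochhammer_succ_left]
  cases b
  · simp only [fallingRatio, Bool.toNat_false, Nat.sub_zero, Bool.false_eq_true, if_false]
    rw [div_mul_eq_mul_div, mul_comm, ← hsucc, descPochhammer_succ_eval]
    ring
  · obtain ⟨n, rfl⟩ := Nat.exists_eq_add_of_le' hn
    obtain ⟨m, rfl⟩ := Nat.exists_eq_add_of_le' hm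
    simp only [fallingRatio, Bool.toNat_true, Nat.add_sub_cancel, if_true, hsucc,
      Nat.factorial_succ]
    push_cast
    field_simp

variable {d : ℕ}

lemma Fq_eq_prod_fallingRatio_mul_vmd (N : ℕ) (n : Fin (d + 1) → ℕ) :
    Fq d N n = (∏ i : Fin (d + 1), fallingRatio ((N : ℚ) + (i : ℕ)) (n i) (n i + d - i)) *
      vmd (fun i => ((n i + d - i : ℕ) : ℚ)) := by
  simp only [Fq, fallingRatio, descPochhammer_eval_eq_prod_range, prod_div_distrib]
  ring

lemma Fq_zero_right (N : ℕ) : Fq d N 0 = 1 := by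
  have hfact : ∏ i : Fin (d + 1), (d - i : ℕ).factorial = d.superFactorial := by
    rw [← Nat.prod_range_succ_factorial, ← Fin.prod_univ_eq_prod_range,
      ← Equiv.prod_comp Fin.revPerm]
    exact prod_congr rfl fun i _ => by
      rw [Fin.revPerm_apply, Fin.val_rev, Nat.add_sub_add_right, Nat.sub_sub_self i.is_le]
  simp only [Fq, Pi.zero_apply, range_zero, prod_empty, prod_const_one, one_mul, zero_add]
  rw [vmd_staircase, ← hfact, Nat.cast_prod]
  exact div_self (prod_ne_zero_iff.2 fun i _ => by positivity)

lemma Fq_eq_zero_of_lt {N : ℕ} {n : Fin (d + 1) → ℕ} (h : N < n 0) : Fq d N n = 0 := by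
  rw [Fq, prod_eq_zero (mem_univ 0) (prod_eq_zero (mem_range.2 h) (by simp)), zero_mul, zero_div]

lemma Fq_eq_zero_of_not_antitone {N : ℕ} {n : Fin (d + 1) → ℕ}
    (h : ∀ i : Fin d, n i.succ ≤ n i.castSucc + 1) (hn : ¬ Antitone n) : Fq d N n = 0 := by
  obtain ⟨i, hi⟩ : ∃ i : Fin d, n i.castSucc < n i.succ := by
    simpa [Fin.antitone_iff_succ_le] using hn
  rw [Fq, vmd_eq_zero_of_eq _ (Fin.castSucc_lt_succ (i := i)), mul_zero, zero_div]
  have := h i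
  have := i.is_lt
  simp only [Fin.val_castSucc, Fin.val_succ]
  congr 1
  omega

lemma prod_mul_vmd_eq_zero_of_not_le {R : Type*} [CommRing R] {n : Fin (d + 1) → ℕ}
    (hn : Antitone n) {s : Fin (d + 1) → Bool} (hs : ¬ ∀ i, (s i).toNat ≤ n i) (c : R) :
    (∏ i, if s i then ((n i + d - i : ℕ) : R) else c - ((n i + d - i : ℕ) : R)) *
      vmd (fun i => ((n i + d - i : ℕ) : R) - (s i).toNat) = 0 := by
  obtain ⟨i₀, hi₀⟩ := not_forall.1 hs
  have hs₀ : s i₀ = true := by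
    by_contra h
    simp_all
  -- `j` is the last index with `s j`; it has `n j = 0`, and so does `j + 1` if `j < d`.
  obtain ⟨j, hj, hmax⟩ := (univ.filter fun i => s i = true).exists_max_image id
    ⟨i₀, mem_filter.2 ⟨mem_univ _, hs₀⟩⟩
  have hsj : s j = true := (mem_filter.1 hj).2
  have hnj : n j = 0 := by
    have : n j ≤ n i₀ := hn (hmax i₀ (mem_filter.2 ⟨mem_univ _, hs₀⟩))
    simp only [hs₀, Bool.toNat_true] at hi₀
    omega
  rcases Fin.eq_castSucc_or_eq_last j with ⟨j, rfl⟩ | rfl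
  · have hn' : n j.succ = 0 := by
      have := hn (Fin.castSucc_lt_succ (i := j)).le
      omega
    have hs' : s j.succ = false := by
      by_contra h
      have := hmax j.succ (mem_filter.2 ⟨mem_univ _, by simpa using h⟩)
      exact absurd this (not_le.2 Fin.castSucc_lt_succ)
    refine mul_eq_zero_of_right _ (vmd_eq_zero_of_eq _ (Fin.castSucc_lt_succ (i := j)) ?_)
    have := j.is_lt
    simp only [hsj, hs', hnj, hn', Fin.val_castSucc, Fin.val_succ, Bool.toNat_true,
      Bool.toNat_false, zero_add, Nat.cast_one, Nat.cast_zero, sub_zero]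
    rw [Nat.cast_sub (by omega), Nat.cast_sub (by omega)]
    push_cast
    ring
  · refine mul_eq_zero_of_left (prod_eq_zero (mem_univ (Fin.last d)) ?_) _
    simp [hsj, hnj]

lemma Fq_sub_toNat_mul (N : ℕ) {n : Fin (d + 1) → ℕ} {s : Fin (d + 1) → Bool}
    (hs : ∀ i, (s i).toNat ≤ n i) :
    Fq d N (n - Bool.toNat ∘ s) * ∏ i : Fin (d + 1), ((N : ℚ) + (i : ℕ) + 1) =
      (∏ i : Fin (d + 1), fallingRatio ((N : ℚ) + (i : ℕ) + 1) (n i) (n i + d - i)) *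
        ((∏ i, if s i then ((n i + d - i : ℕ) : ℚ)
            else ((N + 1 + d : ℕ) : ℚ) - (n i + d - i : ℕ)) *
          vmd (fun i => ((n i + d - i : ℕ) : ℚ) - (s i).toNat)) := by
  have hm (i : Fin (d + 1)) : n i - (s i).toNat + d - i = n i + d - i - (s i).toNat := by
    have := hs i
    have := i.is_le
    omega
  have hsm (i : Fin (d + 1)) : (s i).toNat ≤ n i + d - i := by
    have := hs i
    have := i.is_le
    omega
  have hcast (i : Fin (d + 1)) :
      ((n i + d - i - (s i).toNat : ℕ) : ℚ) = (n i + d - i : ℕ) - (s i).toNat :=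
    Nat.cast_sub (hsm i)
  have hcoord (i : Fin (d + 1)) :
      fallingRatio ((N : ℚ) + (i : ℕ)) (n i - (s i).toNat) (n i + d - i - (s i).toNat) *
          ((N : ℚ) + (i : ℕ) + 1) =
        fallingRatio ((N : ℚ) + (i : ℕ) + 1) (n i) (n i + d - i) *
          if s i then ((n i + d - i : ℕ) : ℚ)
          else ((N + 1 + d : ℕ) : ℚ) - (n i + d - i : ℕ) := by
    rw [fallingRatio_sub_toNat_mul _ _ (hs i) (hsm i)]
    have := i.is_le
    split_ifs
    · rfl
    · rw [Nat.cast_sub (by omega)]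
      push_cast
      ring
  simp only [Fq_eq_prod_fallingRatio_mul_vmd, Pi.sub_apply, Function.comp_apply, hm, hcast]
  rw [mul_right_comm, ← prod_mul_distrib, prod_congr rfl fun i _ => hcoord i, prod_mul_distrib,
    mul_assoc]

lemma Fq_succ (N : ℕ) {n : Fin (d + 1) → ℕ} (hn : Antitone n) :
    Fq d (N + 1) n = ∑ s with ∀ i, (s i).toNat ≤ n i, Fq d N (n - Bool.toNat ∘ s) := by
  have hQ : ∏ i : Fin (d + 1), ((N : ℚ) + (i : ℕ) + 1) ≠ 0 :=
    prod_ne_zero_iff.2 fun i _ => by positivity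
  have hrev : ∏ j : Fin (d + 1), (((N + 1 + d : ℕ) : ℚ) - (j : ℕ)) =
      ∏ i : Fin (d + 1), ((N : ℚ) + (i : ℕ) + 1) := by
    rw [← Equiv.prod_comp Fin.revPerm]
    refine prod_congr rfl fun i _ => ?_
    have := i.is_le
    rw [Fin.revPerm_apply, Fin.val_rev, Nat.add_sub_add_right, Nat.cast_sub (by omega)]
    push_cast
    ring
  refine mul_right_cancel₀ hQ ?_
  rw [sum_mul, sum_congr rfl fun s hs => Fq_sub_toNat_mul N (mem_filter.1 hs).2, ← mul_sum,
    sum_filter_of_ne fun s _ h => by_contra fun hs => h (prod_mul_vmd_eq_zero_of_not_le hn hs _),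
    sum_prod_mul_vmd_sub_toNat, hrev, Fq_eq_prod_fallingRatio_mul_vmd]
  simp only [Nat.cast_succ, add_right_comm (N : ℚ) 1]
  ring

end Formula

section Ballot

variable {d : ℕ}

def IsBallotWord (n : Fin (d + 1) → ℕ) {N : ℕ} (b : Fin N → Fin (d + 1) → Bool) : Prop :=
  (∀ i, ∑ k, (b k i).toNat = n i) ∧
    ∀ L i j, i ≤ j → ∑ k ≤ L, (b k j).toNat ≤ ∑ k ≤ L, (b k i).toNat

lemma ballotCount_eq_card (N : ℕ) (n : Fin (d + 1) → ℕ) :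
    ballotCount d N n = Nat.card {b : Fin N → Fin (d + 1) → Bool // IsBallotWord n b} := by
  refine (Nat.card_eq_of_bijective (fun b => ⟨fun k i => (b.1 k i).toNat,
    fun k i => Bool.toNat_le _, b.2.1, by simpa only [filter_ge_eq_Iic] using b.2.2⟩)
    ⟨fun b c h => ?_, fun v => ?_⟩).symm
  · ext k i
    have toNat_inj : Function.Injective Bool.toNat := by decide
    exact toNat_inj (congrFun (congrFun (congrArg Subtype.val h) k) i)
  · have hv (k i) : (decide (v.1 k i = 1)).toNat = v.1 k i := by
      have := v.2.1 k i
      interval_cases v.1 k i <;> rfl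
    refine ⟨⟨fun k i => decide (v.1 k i = 1), ?_⟩, Subtype.ext (funext₂ hv)⟩
    simpa only [IsBallotWord, hv, filter_ge_eq_Iic] using v.2.2

lemma IsBallotWord.antitone {N : ℕ} {n : Fin (d + 1) → ℕ} {b : Fin N → Fin (d + 1) → Bool}
    (h : IsBallotWord n b) : Antitone n := by
  intro i j hij
  rcases N with _ | N
  · simp [← h.1]
  · simpa only [← Fin.top_eq_last, Iic_top, h.1] using h.2 ⊤ i j hij

lemma isBallotWord_snoc_iff {N : ℕ} {n : Fin (d + 1) → ℕ} (hn : Antitone n)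
    (w : Fin N → Fin (d + 1) → Bool) (s : Fin (d + 1) → Bool) :
    IsBallotWord n (Fin.snoc w s : Fin (N + 1) → Fin (d + 1) → Bool) ↔
      (∀ i, (s i).toNat ≤ n i) ∧ IsBallotWord (n - Bool.toNat ∘ s) w := by
  set b : Fin (N + 1) → Fin (d + 1) → Bool := Fin.snoc w s
  have htotal (i) : ∑ k, (b k i).toNat = ∑ k, (w k i).toNat + (s i).toNat := by
    simp [b, Fin.sum_univ_castSucc]
  have hprefix (L : Fin N) (i) :
      ∑ k ≤ L.castSucc, (b k i).toNat = ∑ k ≤ L, (w k i).toNat := by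
    simp [b, Fin.sum_Iic_castSucc]
  simp only [IsBallotWord, Fin.forall_fin_succ' (P := fun L => ∀ i j, i ≤ j → _), hprefix,
    ← Fin.top_eq_last, Iic_top, htotal, Pi.sub_apply, Function.comp_apply]
  constructor
  · rintro ⟨htotal, hw, -⟩
    exact ⟨fun i => htotal i ▸ Nat.le_add_left _ _, fun i => by have := htotal i; omega, hw⟩
  · rintro ⟨hs, htotal, hw⟩
    have htotal' (i) : ∑ k, (w k i).toNat + (s i).toNat = n i := by
      have := htotal i
      have := hs i
      omega
    exact ⟨htotal', hw, fun i j hij => by simpa only [htotal'] using hn hij⟩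

lemma ballotCount_eq_zero_of_not_antitone {N : ℕ} {n : Fin (d + 1) → ℕ} (hn : ¬ Antitone n) :
    ballotCount d N n = 0 := by
  rw [ballotCount_eq_card]
  exact Nat.card_eq_zero.2 (Or.inl ⟨fun b => hn b.2.antitone⟩)

lemma ballotCount_zero (n : Fin (d + 1) → ℕ) : ballotCount d 0 n = if n = 0 then 1 else 0 := by
  rw [ballotCount_eq_card]
  split_ifs with hn
  · subst hn
    simp [IsBallotWord]
  · refine Nat.card_eq_zero.2 (Or.inl ⟨fun b => hn (funext fun i => ?_)⟩)
    simpa using (b.2.1 i).symm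

lemma ballotCount_succ (N : ℕ) {n : Fin (d + 1) → ℕ} (hn : Antitone n) :
    ballotCount d (N + 1) n =
      ∑ s with ∀ i, (s i).toNat ≤ n i, ballotCount d N (n - Bool.toNat ∘ s) := by
  let e : {b : Fin (N + 1) → Fin (d + 1) → Bool // IsBallotWord n b} ≃
      Σ s : Fin (d + 1) → Bool,
        {w // (∀ i, (s i).toNat ≤ n i) ∧ IsBallotWord (n - Bool.toNat ∘ s) w} :=
    (Equiv.subtypeEquiv (Fin.snocEquiv _) fun p =>
      (isBallotWord_snoc_iff hn p.2 p.1).symm).symm.trans (Equiv.subtypeProdEquivSigmaSubtype _)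
  rw [ballotCount_eq_card, Nat.card_congr e, Nat.card_sigma, sum_filter]
  refine sum_congr rfl fun s _ => ?_
  split_ifs with hs
  · rw [ballotCount_eq_card]
    exact Nat.card_congr (Equiv.subtypeEquivRight fun w => and_iff_right hs)
  · exact Nat.card_eq_zero.2 (Or.inl ⟨fun w => hs w.2.1⟩)

end Ballot

lemma cast_ballotCount_zero_of_antitone {d : ℕ} {n : Fin (d + 1) → ℕ} (hn : Antitone n) :
    (ballotCount d 0 n : ℚ) = Fq d 0 n := by
  rw [ballotCount_zero]
  split_ifs with h0
  · rw [h0, Fq_zero_right, Nat.cast_one]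
  · have hpos : 0 < n 0 := Nat.pos_of_ne_zero fun hn0 =>
      h0 (funext fun i => Nat.eq_zero_of_le_zero (hn0 ▸ hn (Fin.zero_le i)))
    rw [Fq_eq_zero_of_lt hpos, Nat.cast_zero]

/-- Theorem 1 of the paper: if `†(N,n_0,…,n_d) = 0` then `C = 0`, and if
`†(N,n_0,…,n_d) = 1` (i.e. `n_{i-1} + 1 ≥ n_i` for all `1 ≤ i ≤ d`) then `C = F`. -/
theorem statement0 (d N : ℕ) (n : Fin (d + 1) → ℕ) :
    ((¬ ∀ i : Fin d, n i.succ ≤ n i.castSucc + 1) → ballotCount d N n = 0) ∧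
    ((∀ i : Fin d, n i.succ ≤ n i.castSucc + 1) → (ballotCount d N n : ℚ) = Fq d N n) := by
  refine ⟨fun h => ballotCount_eq_zero_of_not_antitone fun hn => h fun i => ?_, fun h => ?_⟩
  · exact (Fin.antitone_iff_succ_le.1 hn i).trans (Nat.le_succ _)
  induction N generalizing n with
  | zero =>
    by_cases hn : Antitone n
    · exact cast_ballotCount_zero_of_antitone hn
    · rw [ballotCount_eq_zero_of_not_antitone hn, Fq_eq_zero_of_not_antitone h hn, Nat.cast_zero]
  | succ N ih =>
    by_cases hn : Antitone n
    · rw [ballotCount_succ N hn, Fq_succ N hn, Nat.cast_sum]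
      refine sum_congr rfl fun s hs => ih _ fun i => ?_
      have := Fin.antitone_iff_succ_le.1 hn i
      have := (mem_filter.1 hs).2 i.castSucc
      have := (s i.castSucc).toNat_le
      simp only [Pi.sub_apply, Function.comp_apply]
      omega
    · rw [ballotCount_eq_zero_of_not_antitone hn, Fq_eq_zero_of_not_antitone h hn, Nat.cast_zero]
end

section
/- For every n ∈ ℕ and all elements X, t, x_0, …, x_n of a commutative ring, Σ_{(j_0,…,j_n) ∈ {0,1}^{n+1}} (∏_{i=0}^n (X − x_i)^{1−j_i} · x_i^{j_i}) · V(x_0 − j_0·t, …, x_n − j_n·t) = (∏_{r=0}^n (X − r·t)) · V(x_0, …, x_n). -/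
open Polynomial Finset

section aux
variable {R : Type*} [CommRing R]

lemma vmd_eq_det {k : ℕ} (x : Fin k → R) :
    vmd x = (-1 : R) ^ (∑ i : Fin k, (Finset.Ioi i).card) * (Matrix.vandermonde x).det := by
  rw [Matrix.det_vandermonde, vmd, ← Finset.prod_pow_eq_pow_sum, ← Finset.prod_mul_distrib]
  refine Finset.prod_congr rfl fun i _ => ?_
  have : Finset.univ.filter (fun j => i < j) = Finset.Ioi i := by ext j; simp
  rw [this, ← Finset.prod_const, ← Finset.prod_mul_distrib]
  exact Finset.prod_congr rfl fun j _ => by ring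

/-- The auxiliary polynomial `(X - Y) Y^m + Y (Y - t)^m`. -/
noncomputable def auxP (X t : R) (m : ℕ) : R[X] :=
  (C X - Polynomial.X) * Polynomial.X ^ m + Polynomial.X * (Polynomial.X - C t) ^ m

lemma coeff_auxP_of_lt (X t : R) {m s : ℕ} (h : m < s) : (auxP X t m).coeff s = 0 := by
  obtain ⟨s', rfl⟩ : ∃ s', s = s' + 1 := ⟨s - 1, by omega⟩
  have hm : m ≤ s' := by omega
  rw [auxP, sub_mul, sub_eq_add_neg (Polynomial.X) (C t), ← C_neg]
  simp only [coeff_add, coeff_sub, coeff_C_mul, coeff_X_pow, coeff_X_mul, coeff_X_add_C_pow]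
  rcases eq_or_lt_of_le hm with rfl | hlt
  · simp
  · have h1 : ¬ s' + 1 = m := by omega
    have h2 : ¬ s' = m := by omega
    simp [Nat.choose_eq_zero_of_lt hlt, h1, h2]

lemma coeff_auxP_self (X t : R) (m : ℕ) : (auxP X t m).coeff m = X - m • t := by
  cases m with
  | zero => simp [auxP]
  | succ s' =>
    rw [auxP, sub_mul, sub_eq_add_neg (Polynomial.X) (C t), ← C_neg]
    simp only [coeff_add, coeff_sub, coeff_C_mul, coeff_X_pow, coeff_X_mul, coeff_X_add_C_pow]
    simp [Nat.choose_succ_self_right, (by omega : ¬ (s' = s' + 1)), nsmul_eq_mul]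
    ring

lemma natDegree_auxP_le (X t : R) (m : ℕ) : (auxP X t m).natDegree ≤ m :=
  Polynomial.natDegree_le_iff_coeff_eq_zero.mpr fun _ h => coeff_auxP_of_lt X t h

lemma pow_factor (X y : R) (b : Fin 2) :
    (X - y) ^ (1 - (b : ℕ)) * y ^ (b : ℕ) = if b = 0 then X - y else y := by
  fin_cases b <;> simp

lemma key (n : ℕ) (X t : R) (x : Fin (n + 1) → R) :
    ∑ j : Fin (n + 1) → Fin 2,
      (∏ i : Fin (n + 1), (X - x i) ^ (1 - (j i : ℕ)) * (x i) ^ ((j i : ℕ))) *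
        (Matrix.vandermonde (fun i => x i - (j i : ℕ) • t)).det
      = (∏ r ∈ Finset.range (n + 1), (X - r • t)) * (Matrix.vandermonde x).det := by
  classical
  set c : Fin (n + 1) → Fin 2 → R := fun i b => if b = 0 then X - x i else x i with hc
  set w : Fin (n + 1) → Fin 2 → (Fin (n + 1) → R) :=
    fun i b m => (x i - (b : ℕ) • t) ^ (m : ℕ) with hw
  have f := (Matrix.detRowAlternating : (Fin (n+1) → R) [⋀^Fin (n+1)]→ₗ[R] R)
  calc
    ∑ j : Fin (n + 1) → Fin 2,
        (∏ i : Fin (n + 1), (X - x i) ^ (1 - (j i : ℕ)) * (x i) ^ ((j i : ℕ))) *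
          (Matrix.vandermonde (fun i => x i - (j i : ℕ) • t)).det
      = ∑ j : Fin (n + 1) → Fin 2,
          (Matrix.detRowAlternating : (Fin (n+1) → R) [⋀^Fin (n+1)]→ₗ[R] R).toMultilinearMap
            (fun i => c i (j i) • w i (j i)) := by
        refine Finset.sum_congr rfl fun j _ => ?_
        rw [MultilinearMap.map_smul_univ]
        simp only [smul_eq_mul]
        congr 1
        exact Finset.prod_congr rfl fun i _ => pow_factor X (x i) (j i)
    _ = (Matrix.detRowAlternating : (Fin (n+1) → R) [⋀^Fin (n+1)]→ₗ[R] R).toMultilinearMap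
          (fun i => ∑ b : Fin 2, c i b • w i b) := by
        rw [MultilinearMap.map_sum]
    _ = (Matrix.of (fun i (m : Fin (n+1)) => (auxP X t (m : ℕ)).eval (x i))).det := by
        have hrows : (fun i => ∑ b : Fin 2, c i b • w i b)
            = fun i (m : Fin (n+1)) => (auxP X t (m : ℕ)).eval (x i) := by
          funext i m
          simp only [Fin.sum_univ_two, hc, hw, auxP, Pi.smul_apply, smul_eq_mul,
            Fin.isValue, Fin.val_zero, Fin.val_one, zero_smul, one_smul, sub_zero,
            eval_add, eval_mul, eval_sub, eval_C, eval_X, eval_pow]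
          norm_num
        rw [hrows]
        rfl
    _ = (∏ r ∈ Finset.range (n + 1), (X - r • t)) * (Matrix.vandermonde x).det := by
        rw [Matrix.eval_matrixOfPolynomials_eq_vandermonde_mul_matrixOfPolynomials x
          (fun m => auxP X t (m : ℕ)) (fun m => natDegree_auxP_le X t m),
          Matrix.det_mul,
          Matrix.det_of_upperTriangular (Matrix.matrixOfPolynomials_blockTriangular
            (fun m => auxP X t (m : ℕ)) (fun m => natDegree_auxP_le X t m))]
        rw [mul_comm]
        congr 1
        rw [← Fin.prod_univ_eq_prod_range (fun r => X - r • t) (n + 1)]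
        exact Finset.prod_congr rfl fun m _ => coeff_auxP_self X t (m : ℕ)

end aux

/-- Lemma (the key algebraic identity, equation (2) of the paper):
`Σ_{j ∈ {0,1}^{n+1}} (∏_i (X-x_i)^{1-j_i} x_i^{j_i}) V(x - j t) = (∏_{r=0}^n (X - r t)) V(x)`. -/
theorem statement1 {R : Type*} [CommRing R] (n : ℕ) (X t : R) (x : Fin (n + 1) → R) :
    ∑ j : Fin (n + 1) → Fin 2,
      (∏ i : Fin (n + 1), (X - x i) ^ (1 - (j i : ℕ)) * (x i) ^ ((j i : ℕ))) *
        vmd (fun i => x i - (j i : ℕ) • t)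
      = (∏ r ∈ Finset.range (n + 1), (X - r • t)) * vmd x := by
  simp_rw [vmd_eq_det]
  set e := (-1 : R) ^ (∑ i : Fin (n+1), (Finset.Ioi i).card)
  calc
    ∑ j : Fin (n + 1) → Fin 2,
        (∏ i : Fin (n + 1), (X - x i) ^ (1 - (j i : ℕ)) * (x i) ^ ((j i : ℕ))) *
          (e * (Matrix.vandermonde (fun i => x i - (j i : ℕ) • t)).det)
      = e * ∑ j : Fin (n + 1) → Fin 2,
          (∏ i : Fin (n + 1), (X - x i) ^ (1 - (j i : ℕ)) * (x i) ^ ((j i : ℕ))) *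
            (Matrix.vandermonde (fun i => x i - (j i : ℕ) • t)).det := by
        rw [Finset.mul_sum]; exact Finset.sum_congr rfl fun j _ => by ring
    _ = e * ((∏ r ∈ Finset.range (n + 1), (X - r • t)) * (Matrix.vandermonde x).det) := by
        rw [key]
    _ = (∏ r ∈ Finset.range (n + 1), (X - r • t)) * (e * (Matrix.vandermonde x).det) := by
        ring
end

section
/- The function G(X, t, x_0, …, x_n) = Σ_{(j_0,…,j_n) ∈ {0,1}^{n+1}} (∏_{i=0}^n (X − x_i)^{1−j_i} x_i^{j_i}) · V(x_0 − j_0·t, …, x_n − j_n·t), viewed as a polynomial in the variables x_0, …, x_n, is antisymmetric: for any indices 0 ≤ k < l ≤ n, exchanging the variables x_k and x_l in G yields −G. -/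
open MvPolynomial

/-- The coefficient ring `ℤ[X,t]`, realized as polynomials in two variables. -/
abbrev A : Type := MvPolynomial (Fin 2) ℤ

/-- The variable `X` of `ℤ[X,t]`. -/
noncomputable def Xv : A := MvPolynomial.X 0

/-- The variable `t` of `ℤ[X,t]`. -/
noncomputable def tv : A := MvPolynomial.X 1

/-- The polynomial
`G = Σ_{j ∈ {0,1}^{n+1}} (∏_i (X - x_i)^{1-j_i} x_i^{j_i}) · V(x_0 - j_0 t, …, x_n - j_n t)`,
regarded as a multivariate polynomial in `x_0, …, x_n` with coefficients in `ℤ[X,t]`. -/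
noncomputable def G (n : ℕ) : MvPolynomial (Fin (n + 1)) A :=
  ∑ j : Fin (n + 1) → Fin 2,
    (∏ i : Fin (n + 1),
        (C Xv - X i) ^ (1 - (j i : ℕ)) * (X i) ^ ((j i : ℕ))) *
      ∏ i : Fin (n + 1), ∏ k ∈ Finset.univ.filter (fun k => i < k),
        ((X i - (j i : ℕ) • C tv) - (X k - (j k : ℕ) • C tv))

/-!
Renaming the variables by a permutation `σ` sends the summand of `G` indexed by `j` to
`sign σ` times the summand indexed by `j ∘ σ⁻¹`: the weight `∏ (X - x_i)^{1-j_i} x_i^{j_i}` is merely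
reindexed, while the Vandermonde factor is alternating. Summing over `j` gives
`rename σ G = sign σ • G`, and a transposition has sign `-1`.
-/

section VandermondeProd

variable {R S : Type*} [CommRing R] [CommRing S] {m : ℕ}

def vandermondeProd (y : Fin m → R) : R :=
  ∏ i : Fin m, ∏ k ∈ Finset.univ.filter (fun k => i < k), (y i - y k)

-- The factors are `y i - y k` rather than `y k - y i`, hence the negated nodes.
theorem vandermondeProd_eq_det (y : Fin m → R) :
    vandermondeProd y = (Matrix.vandermonde (-y)).det := by
  rw [Matrix.det_vandermonde]
  simp [vandermondeProd, Finset.filter_lt_eq_Ioi, neg_add_eq_sub]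

theorem vandermondeProd_comp_perm (σ : Equiv.Perm (Fin m)) (y : Fin m → R) :
    vandermondeProd (y ∘ σ) = Equiv.Perm.sign σ • vandermondeProd y := by
  have hperm : Matrix.vandermonde (-(y ∘ σ)) = (Matrix.vandermonde (-y)).submatrix σ id := by
    ext i j
    simp [Matrix.vandermonde_apply]
  rw [vandermondeProd_eq_det, vandermondeProd_eq_det, hperm, Matrix.det_permute,
    Units.smul_def, zsmul_eq_mul]

theorem map_vandermondeProd {F : Type*} [FunLike F R S] [RingHomClass F R S] (f : F)
    (y : Fin m → R) :
    f (vandermondeProd y) = vandermondeProd (f ∘ y) := by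
  simp [vandermondeProd, map_prod, map_sub]

end VandermondeProd

noncomputable def GTerm (n : ℕ) (j : Fin (n + 1) → Fin 2) : MvPolynomial (Fin (n + 1)) A :=
  (∏ i, (C Xv - X i) ^ (1 - (j i : ℕ)) * X i ^ (j i : ℕ)) *
    vandermondeProd fun i => X i - (j i : ℕ) • C tv

theorem G_eq_sum_GTerm (n : ℕ) : G n = ∑ j, GTerm n j := rfl

theorem rename_GTerm {n : ℕ} (σ : Equiv.Perm (Fin (n + 1))) (j : Fin (n + 1) → Fin 2) :
    rename σ (GTerm n j) = Equiv.Perm.sign σ • GTerm n (j ∘ σ.symm) := by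
  have hweight : rename σ (∏ i, (C Xv - X i) ^ (1 - (j i : ℕ)) * X i ^ (j i : ℕ)) =
      ∏ i, (C Xv - X i) ^ (1 - (j (σ.symm i) : ℕ)) * X i ^ (j (σ.symm i) : ℕ) := by
    rw [map_prod]
    exact Fintype.prod_equiv σ _ _ fun i => by simp
  have hvand : rename σ (vandermondeProd fun i => X i - (j i : ℕ) • C tv) =
      Equiv.Perm.sign σ • vandermondeProd fun i => X i - (j (σ.symm i) : ℕ) • C tv := by
    rw [← vandermondeProd_comp_perm, map_vandermondeProd]
    congr 1
    funext i
    simp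
  rw [GTerm, map_mul, hweight, hvand, mul_smul_comm]
  rfl

theorem rename_G {n : ℕ} (σ : Equiv.Perm (Fin (n + 1))) :
    rename σ (G n) = Equiv.Perm.sign σ • G n := by
  rw [G_eq_sum_GTerm, map_sum, Finset.smul_sum]
  simp only [rename_GTerm]
  exact Fintype.sum_equiv (σ.arrowCongr (Equiv.refl _)) _ _ fun j => rfl

/-- `G` is antisymmetric in the variables `x_0, …, x_n`: exchanging `x_k` and `x_l`
yields `-G`. -/
theorem statement2 (n : ℕ) (k l : Fin (n + 1)) (hkl : k < l) :
    MvPolynomial.rename (Equiv.swap k l) (G n) = - G n := by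
  rw [rename_G, Equiv.Perm.sign_swap hkl.ne, Units.neg_smul, one_smul]
end

section
/- The polynomial G(X, t, x_0, …, x_n) = Σ_{(j_0,…,j_n) ∈ {0,1}^{n+1}} (∏_{i=0}^n (X − x_i)^{1−j_i} x_i^{j_i}) · V(x_0 − j_0·t, …, x_n − j_n·t), viewed as a multivariate polynomial in x_0, …, x_n with coefficients in ℤ[X,t], is homogeneous of degree n(n+1)/2 in the variables x_0, …, x_n. -/
open MvPolynomial

open MvPolynomial

/-! ### Auxiliary material -/

/-- Shorthand for the ring of polynomials in `x_0, …, x_n` over `A`. -/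
abbrev Rr (n : ℕ) : Type := MvPolynomial (Fin (n + 1)) A

/-- The number of pairs `i < k` in `Fin (n+1)`, i.e. `n(n+1)/2`. -/
def dN (n : ℕ) : ℕ := ∑ i : Fin (n + 1), (Finset.Ioi i).card

lemma dN_eq (n : ℕ) : dN n = n * (n + 1) / 2 := by
  have h1 : ∀ i : Fin (n + 1), (Finset.Ioi i).card = n - (i : ℕ) := by
    intro i; rw [Fin.card_Ioi]; omega
  have h2 := Finset.sum_range_reflect (fun m => m) (n + 1)
  simp only [Nat.add_sub_cancel] at h2
  rw [dN]
  simp only [h1]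
  rw [Fin.sum_univ_eq_sum_range (fun m => n - m) (n + 1)]
  calc ∑ m ∈ Finset.range (n + 1), (n - m)
      = ∑ m ∈ Finset.range (n + 1), m := h2
    _ = (n + 1) * n / 2 := Finset.sum_range_id (n + 1)
    _ = n * (n + 1) / 2 := by rw [mul_comm]

/-- The prefactors `(X - x_i)^{1-b} x_i^b`. -/
noncomputable def ff (n : ℕ) (b : Fin 2) (i : Fin (n + 1)) : Rr n :=
  (C Xv - X i) ^ (1 - (b : ℕ)) * (X i) ^ ((b : ℕ))

/-- The Vandermonde row of `x_i - b t`. -/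
noncomputable def rowf (n : ℕ) (b : Fin 2) (i k : Fin (n + 1)) : Rr n :=
  (X i - (b : ℕ) • C tv) ^ (k : ℕ)

/-- The matrix with entries `(X - x_i) x_i^k + x_i (x_i - t)^k`. -/
noncomputable def Mmat (n : ℕ) : Matrix (Fin (n + 1)) (Fin (n + 1)) (Rr n) :=
  Matrix.of fun i k => ∑ b : Fin 2, ff n b i * rowf n b i k

/-- The sign lemma: the Vandermonde product in the reverse order. -/
lemma sign_lemma (n : ℕ) (w : Fin (n + 1) → Rr n) :
    (∏ i : Fin (n + 1), ∏ k ∈ Finset.Ioi i, (w i - w k))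
      = (-1 : Rr n) ^ dN n * (Matrix.vandermonde w).det := by
  rw [Matrix.det_vandermonde]
  calc ∏ i : Fin (n + 1), ∏ k ∈ Finset.Ioi i, (w i - w k)
      = ∏ i : Fin (n + 1), ∏ k ∈ Finset.Ioi i, ((-1 : Rr n) * (w k - w i)) := by
        refine Finset.prod_congr rfl fun i _ => Finset.prod_congr rfl fun k _ => by ring
    _ = ∏ i : Fin (n + 1),
          ((-1 : Rr n) ^ (Finset.Ioi i).card * ∏ k ∈ Finset.Ioi i, (w k - w i)) := by
        refine Finset.prod_congr rfl fun i _ => ?_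
        rw [Finset.prod_mul_distrib, Finset.prod_const]
    _ = (-1 : Rr n) ^ dN n * ∏ i : Fin (n + 1), ∏ k ∈ Finset.Ioi i, (w k - w i) := by
        rw [Finset.prod_mul_distrib, Finset.prod_pow_eq_pow_sum, dN]

/-- Step A: `G` equals `(-1)^{dN n}` times the determinant of `Mmat`. -/
lemma G_eq_det (n : ℕ) : G n = (-1 : Rr n) ^ dN n * (Mmat n).det := by
  classical
  have hfilter : ∀ i : Fin (n + 1),
      Finset.univ.filter (fun k => i < k) = Finset.Ioi i := by
    intro i; ext k; simp [Finset.mem_Ioi]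
  have hdetv : ∀ j : Fin (n + 1) → Fin 2,
      Matrix.detRowAlternating (fun i => rowf n (j i) i)
        = (Matrix.vandermonde (fun i => X i - (j i : ℕ) • C tv)).det := fun _ => rfl
  have smul_eq : ∀ j : Fin (n + 1) → Fin 2,
      Matrix.detRowAlternating (fun i => ff n (j i) i • rowf n (j i) i)
        = (∏ i, ff n (j i) i) • Matrix.detRowAlternating (fun i => rowf n (j i) i) :=
    fun j => (Matrix.detRowAlternating (R := Rr n) (n := Fin (n + 1))).toMultilinearMap.map_smul_univ
      (fun i => ff n (j i) i) (fun i => rowf n (j i) i)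
  have sum_eq :
      Matrix.detRowAlternating (fun i => ∑ b : Fin 2, ff n b i • rowf n b i)
        = ∑ j : Fin (n + 1) → Fin 2,
            Matrix.detRowAlternating (fun i => ff n (j i) i • rowf n (j i) i) :=
    (Matrix.detRowAlternating (R := Rr n) (n := Fin (n + 1))).toMultilinearMap.map_sum
      (fun i (b : Fin 2) => ff n b i • rowf n b i)
  have hMdet : (Mmat n).det
      = Matrix.detRowAlternating (fun i => ∑ b : Fin 2, ff n b i • rowf n b i) := by
    have : Mmat n = Matrix.of (fun i => ∑ b : Fin 2, ff n b i • rowf n b i) := by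
      funext i k
      simp only [Mmat, Matrix.of_apply, Finset.sum_apply, Pi.smul_apply, smul_eq_mul]
    rw [this]; rfl
  calc G n
      = ∑ j : Fin (n + 1) → Fin 2,
          (∏ i, ff n (j i) i) *
            ∏ i : Fin (n + 1), ∏ k ∈ Finset.Ioi i,
              ((X i - (j i : ℕ) • C tv) - (X k - (j k : ℕ) • C tv)) := by
        rw [G]; simp only [hfilter]; rfl
    _ = ∑ j : Fin (n + 1) → Fin 2, (-1 : Rr n) ^ dN n *
          Matrix.detRowAlternating (fun i => ff n (j i) i • rowf n (j i) i) := by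
        refine Finset.sum_congr rfl fun j _ => ?_
        rw [sign_lemma n (fun i => X i - (j i : ℕ) • C tv), smul_eq j, smul_eq_mul, hdetv j]
        ring
    _ = (-1 : Rr n) ^ dN n * ∑ j : Fin (n + 1) → Fin 2,
          Matrix.detRowAlternating (fun i => ff n (j i) i • rowf n (j i) i) := by
        rw [Finset.mul_sum]
    _ = (-1 : Rr n) ^ dN n * (Mmat n).det := by rw [hMdet, sum_eq]

/-- The univariate polynomial `(X - y) y^k + y (y - t)^k` in `y` over `A = ℤ[X,t]`;
its leading terms cancel, so it has degree at most `k`. -/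
noncomputable def pk (k : ℕ) : Polynomial A :=
  (Polynomial.C Xv - Polynomial.X) * Polynomial.X ^ k +
    Polynomial.X * (Polynomial.X - Polynomial.C tv) ^ k

lemma natDegree_pk_le (k : ℕ) : (pk k).natDegree ≤ k := by
  rw [Polynomial.natDegree_le_iff_coeff_eq_zero]
  intro N hN
  have hmonic : (Polynomial.X - Polynomial.C tv).Monic := Polynomial.monic_X_sub_C tv
  have hdeg : ((Polynomial.X - Polynomial.C tv) ^ k).natDegree = k := by
    rw [hmonic.natDegree_pow, Polynomial.natDegree_X_sub_C, mul_one]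
  rcases eq_or_lt_of_le (Nat.succ_le_of_lt hN) with h | h
  · -- N = k + 1
    have hN1 : N = k + 1 := h.symm
    subst hN1
    rw [pk, Polynomial.coeff_add, Polynomial.coeff_mul_X_pow', Polynomial.coeff_X_mul]
    simp only [le_add_iff_nonneg_left, Nat.zero_le, if_true, Nat.add_sub_cancel_left]
    rw [Polynomial.coeff_sub]
    have h1 : ((Polynomial.X - Polynomial.C tv) ^ k).coeff k = 1 := by
      have h' := (hmonic.pow k).coeff_natDegree
      rwa [hdeg] at h'
    simp [h1]
  · -- N ≥ k + 2
    have hN2 : k + 2 ≤ N := h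
    obtain ⟨m, rfl⟩ : ∃ m, N = m + 1 := ⟨N - 1, by omega⟩
    rw [pk, Polynomial.coeff_add, Polynomial.coeff_mul_X_pow', Polynomial.coeff_X_mul]
    have h2 : ((Polynomial.X - Polynomial.C tv) ^ k).coeff m = 0 :=
      Polynomial.coeff_eq_zero_of_natDegree_lt (by rw [hdeg]; omega)
    have h3 : (Polynomial.C Xv - Polynomial.X).coeff (m + 1 - k) = 0 := by
      rw [Polynomial.coeff_sub, Polynomial.coeff_C, Polynomial.coeff_X]
      have hne : ¬ (m + 1 - k = 0) := by omega
      have hne2 : ¬ (1 = m + 1 - k) := by omega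
      simp [hne, hne2]
    rw [h2, if_pos (by omega : k ≤ m + 1), h3, add_zero]

/-- Step B: `Mmat` factors as Vandermonde times a constant matrix. -/
lemma Mmat_eq (n : ℕ) :
    Mmat n = Matrix.vandermonde (fun i : Fin (n + 1) => (X i : Rr n)) *
      (Matrix.of fun m k : Fin (n + 1) => (pk (k : ℕ)).coeff (m : ℕ)).map
        (C : A → Rr n) := by
  funext i k
  rw [Matrix.mul_apply]
  have lhs_eq : (Mmat n) i k = Polynomial.aeval (X i : Rr n) (pk (k : ℕ)) := by
    rw [Mmat, Matrix.of_apply, Fin.sum_univ_two]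
    simp only [ff, rowf, pk, map_add, map_mul, map_sub, map_pow, Polynomial.aeval_X,
      Polynomial.aeval_C]
    norm_num
  rw [lhs_eq, Polynomial.aeval_eq_sum_range'
    (lt_of_le_of_lt (natDegree_pk_le (k : ℕ)) (by omega : (k : ℕ) < n + 1)) (X i : Rr n)]
  rw [← Fin.sum_univ_eq_sum_range (fun m => (pk (k : ℕ)).coeff m • (X i : Rr n) ^ m) (n + 1)]
  refine Finset.sum_congr rfl fun m _ => ?_
  rw [Matrix.vandermonde_apply, Matrix.map_apply, Matrix.of_apply, smul_eq_C_mul, mul_comm]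

/-- `G`, as a polynomial in `x_0, …, x_n` over `ℤ[X,t]`, is homogeneous of degree
`n(n+1)/2`. -/
theorem statement3 (n : ℕ) : (G n).IsHomogeneous (n * (n + 1) / 2) := by
  classical
  have hV : (∏ i : Fin (n + 1), ∏ j ∈ Finset.Ioi i, (X j - X i : Rr n)).IsHomogeneous (dN n) := by
    rw [dN]
    refine IsHomogeneous.prod _ _ _ (fun i _ => ?_)
    have := IsHomogeneous.prod (Finset.Ioi i)
      (fun j => (X j - X i : Rr n)) (fun _ => 1)
      (fun j _ => (isHomogeneous_X A j).sub (isHomogeneous_X A i))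
    simpa using this
  set u₀ : A := (Matrix.of fun m k : Fin (n + 1) => (pk (k : ℕ)).coeff (m : ℕ)).det with hu
  have hGC : G n = C ((-1 : A) ^ dN n * u₀) *
      ∏ i : Fin (n + 1), ∏ j ∈ Finset.Ioi i, (X j - X i : Rr n) := by
    rw [G_eq_det, Mmat_eq, Matrix.det_mul, Matrix.det_vandermonde]
    have hmap : ((Matrix.of fun m k : Fin (n + 1) => (pk (k : ℕ)).coeff (m : ℕ)).map
        (C : A → Rr n)).det = C u₀ := by
      rw [hu, RingHom.map_det]
      rfl
    rw [hmap, map_mul, map_pow, map_neg, map_one]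
    ring
  rw [hGC, ← dN_eq n]
  have := (isHomogeneous_C (Fin (n + 1)) ((-1 : A) ^ dN n * u₀)).mul hV
  simpa using this
end

section
/- Let G(X, t, x_0, …, x_n) = Σ_{(j_0,…,j_n) ∈ {0,1}^{n+1}} (∏_{i=0}^n (X − x_i)^{1−j_i} x_i^{j_i}) · V(x_0 − j_0·t, …, x_n − j_n·t), viewed as a multivariate polynomial in x_0, …, x_n with coefficients in ℤ[X,t]. Then the coefficient of the monomial x_0^n · x_1^{n−1} ⋯ x_{n−1}^1 · x_n^0 in G equals ∏_{r=0}^n (X − r·t) in ℤ[X,t]. -/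
open MvPolynomial

open MvPolynomial

section Aux

variable {R : Type*} [CommRing R] {m : ℕ}

lemma prod_X_pow_aux (g : Fin m → ℕ) :
    (∏ i : Fin m, (MvPolynomial.X i : MvPolynomial (Fin m) R) ^ g i)
      = MvPolynomial.monomial (Finsupp.equivFunOnFinite.symm g) 1 := by
  rw [← MvPolynomial.prod_X_pow_eq_monomial]
  rw [← Finset.prod_subset (Finset.subset_univ (Finsupp.equivFunOnFinite.symm g).support)]
  · exact Finset.prod_congr rfl fun i _ => rfl
  · intro i _ hi
    rw [show g i = 0 from Finsupp.notMem_support_iff.mp hi, pow_zero]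

/-- Coefficient of a product of univariate polynomials in distinct variables. -/
lemma coeff_prod_eval₂ (f : Fin m → Polynomial R) (d : Fin m → ℕ) :
    MvPolynomial.coeff (Finsupp.equivFunOnFinite.symm d)
      (∏ i, Polynomial.eval₂ MvPolynomial.C (MvPolynomial.X i) (f i))
      = ∏ i, (f i).coeff (d i) := by
  have h1 : ∀ i : Fin m, Polynomial.eval₂ (MvPolynomial.C : R →+* MvPolynomial (Fin m) R)
      (MvPolynomial.X i) (f i)
      = ∑ e ∈ (f i).support, MvPolynomial.C ((f i).coeff e) * MvPolynomial.X i ^ e := by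
    intro i
    rw [Polynomial.eval₂_eq_sum, Polynomial.sum]
  simp_rw [h1]
  rw [Finset.prod_univ_sum]
  have h2 : ∀ g : Fin m → ℕ,
      (∏ i, MvPolynomial.C ((f i).coeff (g i)) * MvPolynomial.X i ^ g i : MvPolynomial (Fin m) R)
      = MvPolynomial.C (∏ i, (f i).coeff (g i))
          * MvPolynomial.monomial (Finsupp.equivFunOnFinite.symm g) 1 := by
    intro g
    rw [Finset.prod_mul_distrib, map_prod, prod_X_pow_aux]
  simp_rw [h2, MvPolynomial.coeff_sum, MvPolynomial.coeff_C_mul, MvPolynomial.coeff_monomial]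
  have h3 : ∀ g : Fin m → ℕ,
      (Finsupp.equivFunOnFinite.symm g = Finsupp.equivFunOnFinite.symm d) ↔ g = d :=
    fun g => Equiv.apply_eq_iff_eq _
  simp_rw [mul_ite, mul_one, mul_zero, h3]
  rw [Finset.sum_ite_eq' (Fintype.piFinset fun x => (f x).support) d
    (fun g => ∏ i, (f i).coeff (g i))]
  by_cases hd : d ∈ Fintype.piFinset fun x => (f x).support
  · rw [if_pos hd]
  · rw [if_neg hd]
    rw [Fintype.mem_piFinset] at hd
    push_neg at hd
    obtain ⟨i, hi⟩ := hd
    exact (Finset.prod_eq_zero (Finset.mem_univ i)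
      (Polynomial.notMem_support_iff.mp hi)).symm

lemma pair_rev_prod {M : Type*} [CommMonoid M] (f : Fin m → Fin m → M) :
    ∏ i : Fin m, ∏ k ∈ Finset.Ioi i, f i k
      = ∏ i : Fin m, ∏ k ∈ Finset.Ioi i, f k.rev i.rev := by
  rw [Finset.prod_sigma', Finset.prod_sigma']
  exact Finset.prod_nbij'
    (fun p : (_ : Fin m) × Fin m => (⟨p.2.rev, p.1.rev⟩ : (_ : Fin m) × Fin m))
    (fun p : (_ : Fin m) × Fin m => (⟨p.2.rev, p.1.rev⟩ : (_ : Fin m) × Fin m))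
    (by simp [Fin.rev_lt_rev])
    (by simp [Fin.rev_lt_rev])
    (by simp) (by simp) (by simp)

end Aux

/-- The univariate polynomial over `A` appearing as the factor in variable `x_i`,
for choice `b = j i` and Vandermonde exponent `e`. -/
noncomputable def fpoly (b e : ℕ) : Polynomial A :=
  (Polynomial.C Xv - Polynomial.X) ^ (1 - b) * Polynomial.X ^ b *
    (Polynomial.X - Polynomial.C (b • tv)) ^ e

lemma coeff_fpoly_zero (e d : ℕ) :
    (fpoly 0 e).coeff d
      = (if d = e then Xv else 0) - (if d = e + 1 then 1 else 0) := by
  have : fpoly 0 e = Polynomial.C Xv * Polynomial.X ^ e - Polynomial.X ^ (e + 1) := by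
    simp only [fpoly, zero_smul, map_zero, sub_zero, pow_one, pow_zero, mul_one,
      Nat.sub_zero]
    ring
  rw [this, Polynomial.coeff_sub, Polynomial.coeff_C_mul, Polynomial.coeff_X_pow,
    Polynomial.coeff_X_pow]
  simp [mul_ite]

lemma fpoly_one (e : ℕ) :
    fpoly 1 e = Polynomial.X * (Polynomial.X + Polynomial.C (-tv)) ^ e := by
  simp [fpoly, one_smul, sub_eq_add_neg]

lemma coeff_fpoly_one_zero (e : ℕ) : (fpoly 1 e).coeff 0 = 0 := by
  rw [fpoly_one, Polynomial.mul_coeff_zero, Polynomial.coeff_X_zero, zero_mul]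

lemma coeff_fpoly_one (e k : ℕ) :
    (fpoly 1 e).coeff (k + 1) = (-tv) ^ (e - k) * (e.choose k : A) := by
  rw [fpoly_one, Polynomial.coeff_X_mul, Polynomial.coeff_X_add_C_pow]

/-- The matrix whose determinant computes the staircase coefficient. -/
noncomputable def Bmat (n : ℕ) : Matrix (Fin (n + 1)) (Fin (n + 1)) A :=
  fun i e => ∑ b : Fin 2, (fpoly (b : ℕ) (e : ℕ)).coeff (i : ℕ)

lemma Bmat_apply (n : ℕ) (i e : Fin (n + 1)) :
    Bmat n i e = (fpoly 0 (e : ℕ)).coeff (i : ℕ) + (fpoly 1 (e : ℕ)).coeff (i : ℕ) := by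
  simp [Bmat, Fin.sum_univ_two]

lemma Bmat_triangular (n : ℕ) : (Bmat n).BlockTriangular id := by
  intro i e h
  simp only [id] at h
  have he : (e : ℕ) < (i : ℕ) := h
  obtain ⟨k, hk⟩ : ∃ k, (i : ℕ) = k + 1 := ⟨(i : ℕ) - 1, by omega⟩
  rw [Bmat_apply, coeff_fpoly_zero, hk, coeff_fpoly_one]
  rcases eq_or_lt_of_le (Nat.succ_le_of_lt he) with heq | hlt
  · -- e + 1 = i = k + 1, so e = k
    have hek : (e : ℕ) = k := by omega
    rw [if_neg (by omega), if_pos (by omega), hek]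
    simp
  · -- e + 1 < i, so k > e
    rw [if_neg (by omega), if_neg (by omega), Nat.choose_eq_zero_of_lt (by omega)]
    simp

lemma Bmat_diag (n : ℕ) (i : Fin (n + 1)) :
    Bmat n i i = Xv - (i : ℕ) • tv := by
  rw [Bmat_apply, coeff_fpoly_zero, if_pos rfl, if_neg (by omega)]
  rcases Nat.eq_zero_or_pos (i : ℕ) with h0 | hpos
  · rw [h0, coeff_fpoly_one_zero]
    simp
  · obtain ⟨k, hk⟩ : ∃ k, (i : ℕ) = k + 1 := ⟨(i : ℕ) - 1, by omega⟩
    rw [hk, coeff_fpoly_one, show k + 1 - k = 1 from by omega, pow_one,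
      Nat.choose_succ_self_right]
    push_cast [nsmul_eq_mul]
    ring

lemma term_eq (n : ℕ) (j : Fin (n + 1) → Fin 2) (E : Fin (n + 1) → ℕ) :
    ((∏ i : Fin (n + 1), (C Xv - X i) ^ (1 - (j i : ℕ)) * (X i) ^ ((j i : ℕ))) *
        ∏ i : Fin (n + 1), (X i - C ((j i : ℕ) • tv)) ^ (E i) : MvPolynomial (Fin (n + 1)) A)
      = ∏ i, Polynomial.eval₂ MvPolynomial.C (MvPolynomial.X i) (fpoly (j i) (E i)) := by
  rw [← Finset.prod_mul_distrib]
  refine Finset.prod_congr rfl fun i _ => ?_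
  simp only [fpoly, Polynomial.eval₂_mul, Polynomial.eval₂_pow, Polynomial.eval₂_sub,
    Polynomial.eval₂_X, Polynomial.eval₂_C]

lemma coeff_term (n : ℕ) (j : Fin (n + 1) → Fin 2) :
    MvPolynomial.coeff (Finsupp.equivFunOnFinite.symm fun i : Fin (n + 1) => n - (i : ℕ))
      ((∏ i : Fin (n + 1), (C Xv - X i) ^ (1 - (j i : ℕ)) * (X i) ^ ((j i : ℕ))) *
        ∏ i : Fin (n + 1), ∏ k ∈ Finset.univ.filter (fun k => i < k),
          ((X i - (j i : ℕ) • C tv) - (X k - (j k : ℕ) • C tv)))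
      = ∑ σ : Equiv.Perm (Fin (n + 1)), ((Equiv.Perm.sign σ : ℤ) : A) *
          ∏ i : Fin (n + 1),
            (fpoly (j i) ((σ.symm i.rev : Fin (n + 1)) : ℕ)).coeff (n - (i : ℕ)) := by
  have hsm : ∀ i : Fin (n + 1), (X i - (j i : ℕ) • C tv : MvPolynomial (Fin (n + 1)) A)
      = X i - C ((j i : ℕ) • tv) := by
    intro i
    rw [nsmul_eq_mul, nsmul_eq_mul, map_mul, map_natCast]
  have hfil : ∀ i : Fin (n + 1), Finset.univ.filter (fun k => i < k) = Finset.Ioi i := by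
    intro i; ext k; simp
  set y : Fin (n + 1) → MvPolynomial (Fin (n + 1)) A :=
    fun i => X i - C ((j i : ℕ) • tv) with hy
  simp_rw [hsm, hfil]
  have hdet : (∏ i : Fin (n + 1), ∏ k ∈ Finset.Ioi i, (y i - y k))
      = Matrix.det (Matrix.vandermonde fun a : Fin (n + 1) => y a.rev) := by
    rw [Matrix.det_vandermonde]
    exact pair_rev_prod fun i k => y i - y k
  rw [hdet, Matrix.det_apply', Finset.mul_sum, MvPolynomial.coeff_sum]
  refine Finset.sum_congr rfl fun σ _ => ?_
  have hinner : (∏ i : Fin (n + 1), Matrix.vandermonde (fun a : Fin (n + 1) => y a.rev) (σ i) i)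
      = ∏ i : Fin (n + 1), y i ^ ((σ.symm i.rev : Fin (n + 1)) : ℕ) := by
    simp only [Matrix.vandermonde_apply]
    refine Fintype.prod_equiv (σ.trans Fin.revPerm) _ _ fun x => ?_
    simp
  have hcast : ((Equiv.Perm.sign σ : ℤ) : MvPolynomial (Fin (n + 1)) A)
      = C (((Equiv.Perm.sign σ : ℤ) : A)) := by
    rw [map_intCast]
  rw [mul_left_comm, hcast, MvPolynomial.coeff_C_mul, hinner,
    term_eq n j (fun i => ((σ.symm i.rev : Fin (n + 1)) : ℕ)),
    coeff_prod_eval₂]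

/-- The coefficient of the monomial `x_0^n x_1^{n-1} ⋯ x_n^0` in `G` equals
`∏_{r=0}^n (X - r·t)` in `ℤ[X,t]`. -/
theorem statement4 (n : ℕ) :
    MvPolynomial.coeff (Finsupp.equivFunOnFinite.symm fun i : Fin (n + 1) => n - (i : ℕ)) (G n)
      = ∏ r ∈ Finset.range (n + 1), (Xv - r • tv) := by
  classical
  rw [G, MvPolynomial.coeff_sum]
  rw [Finset.sum_congr rfl fun j _ => coeff_term n j]
  rw [Finset.sum_comm]
  have h1 : ∀ σ : Equiv.Perm (Fin (n + 1)),
      (∑ j : Fin (n + 1) → Fin 2, ((Equiv.Perm.sign σ : ℤ) : A) *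
        ∏ i : Fin (n + 1),
          (fpoly (j i) ((σ.symm i.rev : Fin (n + 1)) : ℕ)).coeff (n - (i : ℕ)))
      = ((Equiv.Perm.sign σ : ℤ) : A) * ∏ i : Fin (n + 1), Bmat n i (σ.symm i) := by
    intro σ
    rw [← Finset.mul_sum]
    congr 1
    have h2 : (∑ j : Fin (n + 1) → Fin 2,
        ∏ i : Fin (n + 1),
          (fpoly (j i) ((σ.symm i.rev : Fin (n + 1)) : ℕ)).coeff (n - (i : ℕ)))
        = ∏ i : Fin (n + 1), ∑ b : Fin 2,
          (fpoly (b : ℕ) ((σ.symm i.rev : Fin (n + 1)) : ℕ)).coeff (n - (i : ℕ)) := by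
      rw [Finset.prod_univ_sum]
      rw [Fintype.piFinset_univ]
    rw [h2]
    have h3 : ∀ i : Fin (n + 1),
        (∑ b : Fin 2, (fpoly (b : ℕ) ((σ.symm i.rev : Fin (n + 1)) : ℕ)).coeff (n - (i : ℕ)))
        = Bmat n i.rev (σ.symm i.rev) := by
      intro i
      have hrev : ((i.rev : Fin (n + 1)) : ℕ) = n - (i : ℕ) := by
        simp [Fin.val_rev]
      simp only [Bmat, hrev]
    rw [Finset.prod_congr rfl fun i _ => h3 i]
    exact Equiv.prod_comp Fin.revPerm (fun i => Bmat n i (σ.symm i))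
  rw [Finset.sum_congr rfl fun σ _ => h1 σ]
  have h4 : (∑ σ : Equiv.Perm (Fin (n + 1)), ((Equiv.Perm.sign σ : ℤ) : A) *
        ∏ i : Fin (n + 1), Bmat n i (σ.symm i))
      = ∑ σ : Equiv.Perm (Fin (n + 1)), ((Equiv.Perm.sign σ : ℤ) : A) *
        ∏ i : Fin (n + 1), (Bmat n).transpose (σ i) i := by
    refine Fintype.sum_equiv (Equiv.inv (Equiv.Perm (Fin (n + 1)))) _ _ fun σ => ?_
    simp only [Equiv.inv_apply, Equiv.Perm.sign_inv, Matrix.transpose_apply]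
    rfl
  rw [h4, ← Matrix.det_apply', Matrix.det_transpose,
    Matrix.det_of_upperTriangular (Bmat_triangular n)]
  rw [Finset.prod_congr rfl fun i _ => Bmat_diag n i]
  exact Fin.prod_univ_eq_prod_range (fun r => Xv - r • tv) (n + 1)
end

section
/- Let d ≥ 0, let N ≥ 0, and let n_0 ≥ n_1 ≥ … ≥ n_d ≥ 1 be integers. Let μ be the Young diagram whose conjugate partition is (n_0, …, n_d) (i.e., column i of μ has n_i cells for 0 ≤ i ≤ d). Then C(N, n_0, …, n_d) equals the number of semistandard Young tableaux of shape μ with entries in {0, …, N−1}. -/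
/-!
A ballot sequence `v` is determined by the sets `S i = {k | v k i = 1}` of times at which
coordinate `i` increases: `#S i = n i`, and the ballot condition says that every initial segment
`{k ≤ L}` meets `S i` at least as often as `S j` when `i ≤ j`. Listing `S i` increasingly gives
a strictly increasing column of length `n i`, and for `n j ≤ n i` this counting condition holds
iff the `r`-th element of `S i` is at most the `r`-th element of `S j` for every `r`, i.e. iff
the columns placed side by side have weakly increasing rows.
-/

open Finset

section Dominance

variable {α : Type*} [LinearOrder α] {k m : ℕ}

theorem OrderEmbedding.card_filter_le_apply (f : Fin m ↪o α) (r : Fin m) :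
    #{s | f s ≤ f r} = r + 1 := by
  simp only [f.le_iff_le, filter_ge_eq_Iic, Fin.card_Iic]

theorem OrderEmbedding.forall_card_filter_le_iff {f : Fin m ↪o α} {g : Fin k ↪o α}
    (hkm : k ≤ m) :
    (∀ L, #{r | g r ≤ L} ≤ #{r | f r ≤ L}) ↔
      ∀ r (hm : r < m) (hk : r < k), f ⟨r, hm⟩ ≤ g ⟨r, hk⟩ := by
  constructor
  · intro hcount r hm hk
    -- otherwise `{x ≤ g r}` holds `r + 1` entries of `g` but at most `r` entries of `f`
    by_contra! hlt
    have hsub : ({s | f s ≤ g ⟨r, hk⟩} : Finset (Fin m)) ⊆ Iio ⟨r, hm⟩ := fun s hs => by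
      simp only [mem_filter, mem_univ, true_and] at hs
      exact mem_Iio.2 (f.lt_iff_lt.1 (hs.trans_lt hlt))
    have := (hcount (g ⟨r, hk⟩)).trans (card_le_card hsub)
    rw [g.card_filter_le_apply, Fin.card_Iio] at this
    omega
  · intro hle L
    refine card_le_card_of_injOn (Fin.castLE hkm) (fun r hr => ?_)
      ((Fin.castLE_injective hkm).injOn)
    simp only [coe_filter, mem_univ, true_and, Set.mem_ofPred_eq] at hr ⊢
    exact (hle r (Fin.castLE hkm r).isLt r.isLt).trans hr

theorem Set.powersetCard.card_filter_le_eq (s : Set.powersetCard α m) (L : α) :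
    #{x ∈ (s : Finset α) | x ≤ L} = #{r | Set.powersetCard.ofFinEmbEquiv.symm s r ≤ L} := by
  conv_lhs => rw [← image_orderEmbOfFin_univ (s : Finset α) (Set.powersetCard.card_eq s)]
  rw [filter_image, Finset.card_image_of_injective _ (orderEmbOfFin _ _).injective]
  rfl

end Dominance

theorem Finset.sum_eq_card_filter_eq_one {ι : Type*} {s : Finset ι} {v : ι → ℕ}
    (hv : ∀ k, v k ≤ 1) : ∑ k ∈ s, v k = #{k ∈ s | v k = 1} := by
  rw [card_filter]
  exact sum_congr rfl fun k _ => by have := hv k; split_ifs <;> omega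

def BallotColumnSets (d N : ℕ) (n : Fin (d + 1) → ℕ) : Type :=
  {S : ∀ i, Set.powersetCard (Fin N) (n i) //
    ∀ i j, i ≤ j → ∀ L,
      #{k ∈ (S j : Finset (Fin N)) | k ≤ L} ≤ #{k ∈ (S i : Finset (Fin N)) | k ≤ L}}

noncomputable def ballotEquivColumnSets (d N : ℕ) (n : Fin (d + 1) → ℕ) :
    {v : Fin N → Fin (d + 1) → ℕ //
      (∀ k i, v k i ≤ 1) ∧
      (∀ i, ∑ k, v k i = n i) ∧
      (∀ L : Fin N, ∀ i j : Fin (d + 1), i ≤ j →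
        ∑ k ∈ Finset.univ.filter (fun k => k ≤ L), v k j ≤
          ∑ k ∈ Finset.univ.filter (fun k => k ≤ L), v k i)} ≃ BallotColumnSets d N n where
  toFun v :=
    have partial_sum_eq (L : Fin N) (i : Fin (d + 1)) :
        ∑ k ∈ univ.filter (· ≤ L), v.1 k i
          = #{k ∈ ({k | v.1 k i = 1} : Finset (Fin N)) | k ≤ L} := by
      rw [sum_eq_card_filter_eq_one (v.2.1 · i), filter_comm]
    ⟨fun i => ⟨({k | v.1 k i = 1} : Finset (Fin N)), by
        rw [Set.powersetCard.mem_iff, ← v.2.2.1 i, sum_eq_card_filter_eq_one (v.2.1 · i)]⟩,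
      fun i j hij L => by simpa only [partial_sum_eq] using v.2.2.2 L i j hij⟩
  invFun S :=
    have partial_sum_eq (L : Fin N) (i : Fin (d + 1)) :
        ∑ k ∈ univ.filter (· ≤ L), (if k ∈ (S.1 i : Finset _) then 1 else 0)
          = #{k ∈ (S.1 i : Finset _) | k ≤ L} := by
      rw [sum_boole, Nat.cast_id, filter_comm, filter_mem_eq_inter, univ_inter]
    ⟨fun k i => if k ∈ (S.1 i : Finset _) then 1 else 0,
      fun k i => by dsimp only; split_ifs <;> omega,
      fun i => by rw [sum_boole, Nat.cast_id, filter_mem_eq_inter, univ_inter,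
        Set.powersetCard.card_eq],
      fun L i j hij => by simpa only [partial_sum_eq] using S.2 i j hij L⟩
  left_inv v := by
    ext k i
    have := v.2.1 k i
    simp only [mem_filter, mem_univ, true_and]
    split_ifs <;> omega
  right_inv S := by
    refine Subtype.ext (funext fun i => Subtype.ext ?_)
    ext k
    simp

def TableauColumns (d N : ℕ) (n : Fin (d + 1) → ℕ) : Type :=
  {c : ∀ i, Fin (n i) ↪o Fin N //
    ∀ i j, i ≤ j → ∀ r (hi : r < n i) (hj : r < n j), c i ⟨r, hi⟩ ≤ c j ⟨r, hj⟩}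

noncomputable def BallotColumnSets.equivTableauColumns {d N : ℕ} {n : Fin (d + 1) → ℕ}
    (hmono : ∀ i j : Fin (d + 1), i ≤ j → n j ≤ n i) :
    BallotColumnSets d N n ≃ TableauColumns d N n :=
  Equiv.subtypeEquiv (Equiv.piCongrRight fun _ => Set.powersetCard.ofFinEmbEquiv.symm)
    fun S => forall₃_congr fun i j hij => by
      simp only [Set.powersetCard.card_filter_le_eq, Equiv.piCongrRight_apply]
      exact OrderEmbedding.forall_card_filter_le_iff (hmono i j hij)

section Tableaux

variable {d N : ℕ} {n : Fin (d + 1) → ℕ} {μ : YoungDiagram}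

theorem YoungDiagram.mem_iff_of_colLen_eq
    (hμ : ∀ i : ℕ, μ.colLen i = if h : i < d + 1 then n ⟨i, h⟩ else 0) {r j : ℕ} :
    (r, j) ∈ μ ↔ ∃ h : j < d + 1, r < n ⟨j, h⟩ := by
  rw [YoungDiagram.mem_iff_lt_colLen, hμ]
  split_ifs with h <;> simp [h]

noncomputable def TableauColumns.toTableau
    (hμ : ∀ i : ℕ, μ.colLen i = if h : i < d + 1 then n ⟨i, h⟩ else 0)
    (c : TableauColumns d N n) : SemistandardYoungTableau μ where
  entry r j :=
    if h : ∃ hj : j < d + 1, r < n ⟨j, hj⟩ then c.1 ⟨j, h.1⟩ ⟨r, h.2⟩ else 0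
  row_weak' {r j₁ j₂} hj cell := by
    obtain ⟨h₂, hr₂⟩ := (μ.mem_iff_of_colLen_eq hμ).1 cell
    obtain ⟨h₁, hr₁⟩ := (μ.mem_iff_of_colLen_eq hμ).1 (μ.up_left_mem le_rfl hj.le cell)
    rw [dif_pos ⟨h₁, hr₁⟩, dif_pos ⟨h₂, hr₂⟩]
    exact c.2 _ _ hj.le r hr₁ hr₂
  col_strict' {r₁ r₂ j} hr cell := by
    obtain ⟨hj, hr₂⟩ := (μ.mem_iff_of_colLen_eq hμ).1 cell
    rw [dif_pos ⟨hj, hr.trans hr₂⟩, dif_pos ⟨hj, hr₂⟩]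
    exact (c.1 ⟨j, hj⟩).strictMono (Fin.mk_lt_mk.2 hr)
  zeros' cell := dif_neg ((μ.mem_iff_of_colLen_eq hμ).not.1 cell)

noncomputable def TableauColumns.equivTableaux
    (hμ : ∀ i : ℕ, μ.colLen i = if h : i < d + 1 then n ⟨i, h⟩ else 0) :
    TableauColumns d N n ≃
      {T : SemistandardYoungTableau μ // ∀ i j : ℕ, (i, j) ∈ μ → T i j < N} where
  toFun c := ⟨c.toTableau hμ, fun r j cell => by
    obtain ⟨hj, hr⟩ := (μ.mem_iff_of_colLen_eq hμ).1 cell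
    exact (dif_pos ⟨hj, hr⟩).trans_lt (c.1 ⟨j, hj⟩ ⟨r, hr⟩).isLt⟩
  invFun T :=
    have cell (i : Fin (d + 1)) (r : Fin (n i)) : (r.1, i.1) ∈ μ :=
      (μ.mem_iff_of_colLen_eq hμ).2 ⟨i.isLt, r.isLt⟩
    ⟨fun i => OrderEmbedding.ofStrictMono (fun r => ⟨T.1 r i, T.2 r i (cell i r)⟩)
        fun _ r hr => T.1.col_strict hr (cell i r),
      fun i j hij r _ hj => T.1.row_weak_of_le hij (cell j ⟨r, hj⟩)⟩
  left_inv c := by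
    refine Subtype.ext (funext fun i => ?_)
    ext r
    exact dif_pos ⟨i.isLt, r.isLt⟩
  right_inv T := by
    refine Subtype.ext (SemistandardYoungTableau.ext fun r j => ?_)
    by_cases cell : (r, j) ∈ μ
    · exact dif_pos ((μ.mem_iff_of_colLen_eq hμ).1 cell)
    · exact (T.1.zeros cell).symm ▸ dif_neg ((μ.mem_iff_of_colLen_eq hμ).not.1 cell)

end Tableaux

theorem statement7_general (d N : ℕ) (n : Fin (d + 1) → ℕ)
    (hmono : ∀ i j : Fin (d + 1), i ≤ j → n j ≤ n i)
    (μ : YoungDiagram)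
    (hμ : ∀ i : ℕ, μ.colLen i = if h : i < d + 1 then n ⟨i, h⟩ else 0) :
    ballotCount d N n
      = Nat.card {T : SemistandardYoungTableau μ // ∀ i j : ℕ, (i, j) ∈ μ → T i j < N} :=
  Nat.card_congr <| (ballotEquivColumnSets d N n).trans <|
    (BallotColumnSets.equivTableauColumns hmono).trans (TableauColumns.equivTableaux hμ)

/-- If `n_0 ≥ … ≥ n_d ≥ 1` and `μ` is the Young diagram whose conjugate partition is
`(n_0, …, n_d)` (column `i` of `μ` has `n_i` cells), then `C(N, n_0, …, n_d)` is the number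
of semistandard Young tableaux of shape `μ` with entries in `{0, …, N-1}`. -/
theorem statement7 (d N : ℕ) (n : Fin (d + 1) → ℕ)
    (hmono : ∀ i j : Fin (d + 1), i ≤ j → n j ≤ n i) (hpos : ∀ i, 1 ≤ n i)
    (μ : YoungDiagram)
    (hμ : ∀ i : ℕ, μ.colLen i = if h : i < d + 1 then n ⟨i, h⟩ else 0) :
    ballotCount d N n
      = Nat.card {T : SemistandardYoungTableau μ // ∀ i j : ℕ, (i, j) ∈ μ → T i j < N} :=
  statement7_general d N n hmono μ hμ
end

section
/- Let λ = (n_0, …, n_d) be a partition with n_0 ≥ … ≥ n_d ≥ 1, and set m_i = n_i + d − i. Then the product of the hook lengths of all cells of λ satisfies (∏_{(i,j) ∈ λ} h(i,j)) · V(m_0, …, m_d) = m_0! · m_1! ⋯ m_d!. -/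
/-- The conjugate partition of `(n 0, …, n d)`: `conjLen j` is the number of indices `i`
with `n i > j`, i.e. the length of column `j`. -/
def conjLen (d : ℕ) (n : Fin (d + 1) → ℕ) (j : ℕ) : ℕ :=
  (Finset.univ.filter (fun i : Fin (d + 1) => j < n i)).card

/-- The hook length of the cell `(i, j)` of the partition `λ = (n 0, …, n d)`:
`h(i,j) = (λ_i - j) + (λ'_j - i) - 1`. -/
def hookLen (d : ℕ) (n : Fin (d + 1) → ℕ) (i : Fin (d + 1)) (j : ℕ) : ℕ :=
  (n i - j) + (conjLen d n j - (i : ℕ)) - 1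

section Aux

variable (d : ℕ) (n : Fin (d + 1) → ℕ)

lemma cL_le (j : ℕ) : conjLen d n j ≤ d + 1 := by
  classical
  calc conjLen d n j ≤ (Finset.univ : Finset (Fin (d+1))).card := Finset.card_filter_le _ _
    _ = d + 1 := by simp

lemma cL_anti {j j' : ℕ} (h : j ≤ j') : conjLen d n j' ≤ conjLen d n j := by
  classical
  apply Finset.card_le_card
  intro i hi
  simp only [Finset.mem_filter, Finset.mem_univ, true_and] at hi ⊢
  omega

lemma lt_cL (hmono : ∀ i j : Fin (d + 1), i ≤ j → n j ≤ n i)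
    {i : Fin (d + 1)} {j : ℕ} (h : j < n i) : (i : ℕ) < conjLen d n j := by
  classical
  have hsub : Finset.Iic i ⊆ Finset.univ.filter (fun i' : Fin (d + 1) => j < n i') := by
    intro i' hi'
    simp only [Finset.mem_Iic] at hi'
    simp only [Finset.mem_filter, Finset.mem_univ, true_and]
    exact lt_of_lt_of_le h (hmono i' i hi')
  have := Finset.card_le_card hsub
  rw [Fin.card_Iic] at this
  unfold conjLen
  omega

lemma cL_le_k (hmono : ∀ i j : Fin (d + 1), i ≤ j → n j ≤ n i)
    {k : Fin (d + 1)} {j : ℕ} (h : n k ≤ j) : conjLen d n j ≤ (k : ℕ) := by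
  classical
  have hsub : Finset.univ.filter (fun i' : Fin (d + 1) => j < n i') ⊆ Finset.Iio k := by
    intro i' hi'
    simp only [Finset.mem_filter, Finset.mem_univ, true_and] at hi'
    simp only [Finset.mem_Iio]
    by_contra hc
    push_neg at hc
    exact absurd (le_trans (hmono k i' hc) h) (by omega)
  have := Finset.card_le_card hsub
  rw [Fin.card_Iio] at this
  exact this

/-- The row lemma: the hooks of row `i` together with the differences `m i - m k`
for `k > i` exhaust `{1, …, m i}`. -/
lemma rowLem (hmono : ∀ i j : Fin (d + 1), i ≤ j → n j ≤ n i) (hpos : ∀ i, 1 ≤ n i)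
    (i : Fin (d + 1)) :
    (∏ j ∈ Finset.range (n i), hookLen d n i j) *
      ∏ k ∈ Finset.univ.filter (fun k : Fin (d + 1) => i < k),
        ((n i + d - (i : ℕ)) - (n k + d - (k : ℕ)))
    = Nat.factorial (n i + d - (i : ℕ)) := by
  classical
  set m : Fin (d + 1) → ℕ := fun k => n k + d - (k : ℕ) with hm
  set g : ℕ → ℕ := fun j => j + (d + 1) - conjLen d n j with hg
  have hid : (i : ℕ) ≤ d := by omega
  -- basic bounds
  have hgi : ∀ j ∈ Finset.range (n i), g j < m i := by
    intro j hj
    rw [Finset.mem_range] at hj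
    have h1 := lt_cL d n hmono hj
    have h2 := cL_le d n j
    simp only [hg, hm]
    omega
  have hmk : ∀ k : Fin (d + 1), i < k → m k < m i := by
    intro k hk
    have h1 : n k ≤ n i := hmono i k (le_of_lt hk)
    have h2 : (k : ℕ) ≤ d := by omega
    have h3 : (i : ℕ) < (k : ℕ) := hk
    simp only [hm]
    omega
  have hdisj : ∀ j ∈ Finset.range (n i), ∀ k : Fin (d + 1), i < k → g j ≠ m k := by
    intro j hj k hk
    rw [Finset.mem_range] at hj
    have hkd : (k : ℕ) ≤ d := by omega
    by_cases hjk : j < n k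
    · have h1 := lt_cL d n hmono hjk
      simp only [hg, hm]
      omega
    · push_neg at hjk
      have h1 := cL_le_k d n hmono hjk
      have h2 := cL_le d n j
      simp only [hg, hm]
      omega
  have hginj : Set.InjOn g (Finset.range (n i)) := by
    intro j hj j' hj' hjj
    by_contra hne
    rcases lt_or_gt_of_ne hne with h | h
    · have := cL_anti d n (le_of_lt h)
      have h2 := cL_le d n j
      simp only [hg] at hjj
      omega
    · have := cL_anti d n (le_of_lt h)
      have h2 := cL_le d n j'
      simp only [hg] at hjj
      omega
  have hminj : Set.InjOn m (Finset.univ.filter (fun k : Fin (d + 1) => i < k)) := by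
    intro k hk k' hk' hkk
    by_contra hne
    have hne' : k ≠ k' := hne
    rcases lt_or_gt_of_ne hne' with h | h
    · have h1 : n k' ≤ n k := hmono k k' (le_of_lt h)
      have h2 : (k : ℕ) < (k' : ℕ) := h
      have h3 : (k' : ℕ) ≤ d := by omega
      simp only [hm] at hkk
      omega
    · have h1 : n k ≤ n k' := hmono k' k (le_of_lt h)
      have h2 : (k' : ℕ) < (k : ℕ) := h
      have h3 : (k : ℕ) ≤ d := by omega
      simp only [hm] at hkk
      omega
  set A : Finset ℕ := (Finset.range (n i)).image g with hA
  set B : Finset ℕ := (Finset.univ.filter (fun k : Fin (d + 1) => i < k)).image m with hB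
  have hAB : Disjoint A B := by
    rw [Finset.disjoint_left]
    intro s hs hs'
    simp only [hA, hB, Finset.mem_image, Finset.mem_filter, Finset.mem_univ, true_and] at hs hs'
    obtain ⟨j, hj, rfl⟩ := hs
    obtain ⟨k, hk, hkk⟩ := hs'
    exact hdisj j hj k hk hkk.symm
  have hcardA : A.card = n i := by
    rw [hA, Finset.card_image_of_injOn hginj, Finset.card_range]
  have hcardB : B.card = d - (i : ℕ) := by
    rw [hB, Finset.card_image_of_injOn hminj]
    have : Finset.univ.filter (fun k : Fin (d + 1) => i < k) = Finset.Ioi i := by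
      ext k; simp [Finset.mem_Ioi]
    rw [this, Fin.card_Ioi]
    omega
  have hsub : A ∪ B ⊆ Finset.range (m i) := by
    intro s hs
    rw [Finset.mem_union] at hs
    rw [Finset.mem_range]
    rcases hs with hs | hs
    · simp only [hA, Finset.mem_image] at hs
      obtain ⟨j, hj, rfl⟩ := hs
      exact hgi j hj
    · simp only [hB, Finset.mem_image, Finset.mem_filter, Finset.mem_univ, true_and] at hs
      obtain ⟨k, hk, rfl⟩ := hs
      exact hmk k hk
  have hcardU : (A ∪ B).card = m i := by
    rw [Finset.card_union_of_disjoint hAB, hcardA, hcardB]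
    simp only [hm]
    omega
  have hunion : A ∪ B = Finset.range (m i) := by
    apply Finset.eq_of_subset_of_card_le hsub
    rw [Finset.card_range, hcardU]
  -- now compute the product
  have key : ∏ s ∈ Finset.range (m i), (m i - s) = Nat.factorial (m i) := by
    rw [← Finset.prod_range_reflect]
    have : ∀ j ∈ Finset.range (m i), m i - (m i - 1 - j) = j + 1 := by
      intro j hj; rw [Finset.mem_range] at hj; omega
    rw [Finset.prod_congr rfl this, Finset.prod_range_add_one_eq_factorial]
  rw [← hunion, Finset.prod_union hAB] at key
  rw [hA, Finset.prod_image hginj] at key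
  rw [hB, Finset.prod_image hminj] at key
  have hhook : ∀ j ∈ Finset.range (n i), m i - g j = hookLen d n i j := by
    intro j hj
    rw [Finset.mem_range] at hj
    have h1 := lt_cL d n hmono hj
    have h2 := cL_le d n j
    simp only [hm, hg]
    unfold hookLen
    omega
  rw [Finset.prod_congr rfl hhook] at key
  exact key

end Aux

/-- For a partition `λ = (n_0, …, n_d)` with `n_0 ≥ … ≥ n_d ≥ 1` and `m_i = n_i + d - i`,
the product of all hook lengths times `V(m_0, …, m_d)` equals `m_0! ⋯ m_d!`. -/
theorem statement10 (d : ℕ) (n : Fin (d + 1) → ℕ)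
    (hmono : ∀ i j : Fin (d + 1), i ≤ j → n j ≤ n i) (hpos : ∀ i, 1 ≤ n i) :
    (∏ i : Fin (d + 1), ∏ j ∈ Finset.range (n i), (hookLen d n i j : ℤ)) *
        vmd (fun i : Fin (d + 1) => ((n i + d - (i : ℕ) : ℕ) : ℤ))
      = ∏ i : Fin (d + 1), (Nat.factorial (n i + d - (i : ℕ)) : ℤ) := by
  classical
  unfold vmd
  rw [← Finset.prod_mul_distrib]
  apply Finset.prod_congr rfl
  intro i _
  have hmk : ∀ k : Fin (d + 1), i < k → n k + d - (k : ℕ) ≤ n i + d - (i : ℕ) := by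
    intro k hk
    have h1 : n k ≤ n i := hmono i k (le_of_lt hk)
    have h2 : (k : ℕ) ≤ d := by omega
    have h3 : (i : ℕ) < (k : ℕ) := hk
    omega
  have step1 : (∏ j ∈ Finset.range (n i), (hookLen d n i j : ℤ)) *
      ∏ k ∈ Finset.univ.filter (fun k : Fin (d + 1) => i < k),
        (((n i + d - (i : ℕ) : ℕ) : ℤ) - ((n k + d - (k : ℕ) : ℕ) : ℤ))
      = (((∏ j ∈ Finset.range (n i), hookLen d n i j) *
          ∏ k ∈ Finset.univ.filter (fun k : Fin (d + 1) => i < k),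
            ((n i + d - (i : ℕ)) - (n k + d - (k : ℕ))) : ℕ) : ℤ) := by
    push_cast
    congr 1
    apply Finset.prod_congr rfl
    intro k hk
    rw [Finset.mem_filter] at hk
    rw [Nat.cast_sub (hmk k hk.2)]
  rw [step1, rowLem d n hmono hpos i]
end

section
/- Let λ = (n_0, …, n_d) be a partition with n_0 ≥ … ≥ n_d ≥ 1, set m_i = n_i + d − i, and fix a row index i with 0 ≤ i ≤ d. Let H_i = {h(i,j) : 0 ≤ j < n_i} be the set of hook lengths of the cells in row i of λ and let K_i = {m_i − m_j : i < j ≤ d}. Then H_i and K_i are disjoint and H_i ∪ K_i = {1, 2, …, m_i}. -/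
lemma conj_ge (d : ℕ) (n : Fin (d + 1) → ℕ)
    (hmono : ∀ i j : Fin (d + 1), i ≤ j → n j ≤ n i) (k : Fin (d + 1)) {j : ℕ}
    (hj : j < n k) : (k : ℕ) + 1 ≤ conjLen d n j := by
  have hsub : Finset.Iic k ⊆ Finset.univ.filter (fun l : Fin (d + 1) => j < n l) := by
    intro l hl
    simp only [Finset.mem_Iic] at hl
    simp only [Finset.mem_filter, Finset.mem_univ, true_and]
    exact lt_of_lt_of_le hj (hmono l k hl)
  calc (k : ℕ) + 1 = (Finset.Iic k).card := (Fin.card_Iic k).symm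
    _ ≤ _ := Finset.card_le_card hsub

lemma conj_le (d : ℕ) (n : Fin (d + 1) → ℕ)
    (hmono : ∀ i j : Fin (d + 1), i ≤ j → n j ≤ n i) (k : Fin (d + 1)) {j : ℕ}
    (hj : n k ≤ j) : conjLen d n j ≤ (k : ℕ) := by
  have hsub : Finset.univ.filter (fun l : Fin (d + 1) => j < n l) ⊆ Finset.Iio k := by
    intro l hl
    simp only [Finset.mem_filter, Finset.mem_univ, true_and] at hl
    simp only [Finset.mem_Iio]
    by_contra hkl
    push_neg at hkl
    exact absurd (lt_of_le_of_lt hj hl) (not_lt.mpr (hmono k l hkl))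
  calc conjLen d n j ≤ (Finset.Iio k).card := Finset.card_le_card hsub
    _ = (k : ℕ) := Fin.card_Iio k

lemma conj_antitone (d : ℕ) (n : Fin (d + 1) → ℕ) {j j' : ℕ} (h : j ≤ j') :
    conjLen d n j' ≤ conjLen d n j := by
  apply Finset.card_le_card
  intro l hl
  simp only [Finset.mem_filter, Finset.mem_univ, true_and] at hl ⊢
  omega

lemma conj_le_top (d : ℕ) (n : Fin (d + 1) → ℕ) (j : ℕ) : conjLen d n j ≤ d + 1 := by
  calc conjLen d n j ≤ Finset.univ.card := Finset.card_filter_le _ _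
    _ = d + 1 := by simp

lemma hook_eq (d : ℕ) (n : Fin (d + 1) → ℕ)
    (hmono : ∀ i j : Fin (d + 1), i ≤ j → n j ≤ n i) (i : Fin (d + 1)) {j : ℕ}
    (hj : j < n i) : hookLen d n i j + 1 + j + (i : ℕ) = n i + conjLen d n j := by
  have h1 : (i : ℕ) + 1 ≤ conjLen d n j := conj_ge d n hmono i hj
  unfold hookLen
  omega

/-- For a partition `λ = (n_0, …, n_d)` with `n_0 ≥ … ≥ n_d ≥ 1`, `m_i = n_i + d - i`,
and a fixed row `i`: the set `H_i` of hook lengths of the cells of row `i` and the set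
`K_i = {m_i - m_j : i < j ≤ d}` are disjoint, and `H_i ∪ K_i = {1, …, m_i}`. -/
theorem statement12 (d : ℕ) (n : Fin (d + 1) → ℕ)
    (hmono : ∀ i j : Fin (d + 1), i ≤ j → n j ≤ n i) (hpos : ∀ i, 1 ≤ n i)
    (i : Fin (d + 1)) :
    Disjoint ((Finset.range (n i)).image (hookLen d n i))
        ((Finset.univ.filter (fun j : Fin (d + 1) => i < j)).image
          (fun j : Fin (d + 1) => (n i + d - (i : ℕ)) - (n j + d - (j : ℕ)))) ∧
      ((Finset.range (n i)).image (hookLen d n i)) ∪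
          ((Finset.univ.filter (fun j : Fin (d + 1) => i < j)).image
            (fun j : Fin (d + 1) => (n i + d - (i : ℕ)) - (n j + d - (j : ℕ))))
        = Finset.Icc 1 (n i + d - (i : ℕ)) := by
  have hd : ∀ k : Fin (d + 1), (k : ℕ) ≤ d := fun k => Nat.lt_succ_iff.mp k.isLt
  have hmono' : ∀ k l : Fin (d + 1), (k : ℕ) ≤ (l : ℕ) → n l ≤ n k := by
    intro k l h
    exact hmono k l (by exact_mod_cast h)
  -- Disjointness
  have hdisj : Disjoint ((Finset.range (n i)).image (hookLen d n i))
      ((Finset.univ.filter (fun j : Fin (d + 1) => i < j)).image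
        (fun j : Fin (d + 1) => (n i + d - (i : ℕ)) - (n j + d - (j : ℕ)))) := by
    rw [Finset.disjoint_left]
    rintro v hv hv'
    simp only [Finset.mem_image, Finset.mem_range] at hv
    simp only [Finset.mem_image, Finset.mem_filter, Finset.mem_univ, true_and] at hv'
    obtain ⟨j, hj, rfl⟩ := hv
    obtain ⟨k, hik, hvk⟩ := hv'
    have hik' : (i : ℕ) < (k : ℕ) := hik
    have hnki : n k ≤ n i := hmono' i k (le_of_lt hik')
    have heq := hook_eq d n hmono i hj
    have hkd := hd k
    have hid := hd i
    -- From hvk : m_i - m_k = hook, derive 1 + j + k = n k + conjLen j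
    have key : 1 + j + (k : ℕ) = n k + conjLen d n j := by omega
    by_cases hcase : j < n k
    · have := conj_ge d n hmono k hcase
      omega
    · have := conj_le d n hmono k (not_lt.mp hcase)
      omega
  refine ⟨hdisj, ?_⟩
  -- Cardinalities
  have hcardH : ((Finset.range (n i)).image (hookLen d n i)).card = n i := by
    rw [Finset.card_image_of_injOn, Finset.card_range]
    intro j hj j' hj' heq
    simp only [Finset.coe_range, Set.mem_Iio] at hj hj'
    have e1 := hook_eq d n hmono i hj
    have e2 := hook_eq d n hmono i hj'
    rcases le_total j j' with h | h
    · have := conj_antitone d n h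
      omega
    · have := conj_antitone d n h
      omega
  have hcardK : ((Finset.univ.filter (fun j : Fin (d + 1) => i < j)).image
      (fun j : Fin (d + 1) => (n i + d - (i : ℕ)) - (n j + d - (j : ℕ)))).card = d - (i : ℕ) := by
    rw [Finset.card_image_of_injOn]
    · have : Finset.univ.filter (fun j : Fin (d + 1) => i < j) = Finset.Ioi i := by
        ext x; simp
      rw [this, Fin.card_Ioi]
      simp
    · intro k hk k' hk' heq
      simp only [Finset.coe_filter, Finset.mem_univ, true_and, Set.mem_setOf_eq] at hk hk'
      have hik : (i : ℕ) < (k : ℕ) := hk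
      have hik' : (i : ℕ) < (k' : ℕ) := hk'
      have h1 : n k ≤ n i := hmono' i k (le_of_lt hik)
      have h2 : n k' ≤ n i := hmono' i k' (le_of_lt hik')
      have hkd := hd k
      have hkd' := hd k'
      have hid := hd i
      have heq2 : n i + d - (i : ℕ) - (n k + d - (k : ℕ)) = n i + d - (i : ℕ) - (n k' + d - (k' : ℕ)) := heq
      by_contra hne
      rcases lt_or_gt_of_ne (fun h : (k : ℕ) = (k' : ℕ) => hne (Fin.ext h)) with h | h
      · have := hmono' k k' (le_of_lt h)
        omega
      · have := hmono' k' k (le_of_lt h)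
        omega
  -- Subset of Icc
  have hsub : ((Finset.range (n i)).image (hookLen d n i)) ∪
      ((Finset.univ.filter (fun j : Fin (d + 1) => i < j)).image
        (fun j : Fin (d + 1) => (n i + d - (i : ℕ)) - (n j + d - (j : ℕ))))
      ⊆ Finset.Icc 1 (n i + d - (i : ℕ)) := by
    intro v hv
    rw [Finset.mem_union] at hv
    rw [Finset.mem_Icc]
    have hid := hd i
    rcases hv with hv | hv
    · simp only [Finset.mem_image, Finset.mem_range] at hv
      obtain ⟨j, hj, rfl⟩ := hv
      have heq := hook_eq d n hmono i hj
      have h1 := conj_ge d n hmono i hj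
      have h2 := conj_le_top d n j
      omega
    · simp only [Finset.mem_image, Finset.mem_filter, Finset.mem_univ, true_and] at hv
      obtain ⟨k, hik, rfl⟩ := hv
      have hik' : (i : ℕ) < (k : ℕ) := hik
      have hnki : n k ≤ n i := hmono' i k (le_of_lt hik')
      have hkd := hd k
      have hnk := hpos k
      omega
  -- Conclude by cardinality
  apply Finset.eq_of_subset_of_card_le hsub
  rw [Nat.card_Icc, Finset.card_union_of_disjoint hdisj, hcardH, hcardK]
  have hid := hd i
  omega
end
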